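/- arXiv:1708.05972 — 5 statements merged into one kernel-verified Lean document; each statement's English description precedes it below -/
import Mathlib

section
/- Let k, l, r be positive integers with k ≥ max{l, 2}. Let M be a (k−1) × l matrix with entries in {1,...,r} such that every value in {1,...,r} occurs in M, no value appears twice in any row or in any column, and each value appears at most twice in M. Then for Lebesgue-almost all (t₁,...,t_r) ∈ [0,1]^r, the column vectors of the real matrix A(t₁,...,t_r) := (t_{M(i,j)})_{i,j} are affinely independent. -/
open MeasureTheory

lemma mvpoly_eval_measurable {n : ℕ} (p : MvPolynomial (Fin n) ℝ) :
    Measurable (fun x : Fin n → ℝ => MvPolynomial.eval x p) := by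
  induction p using MvPolynomial.induction_on with
  | C a => simpa using measurable_const
  | add p q hp hq => simp; exact hp.add hq
  | mul_X p i hp => simp; exact hp.mul (measurable_pi_apply i)

lemma mvpoly_zero_set_null : ∀ (n : ℕ) (p : MvPolynomial (Fin n) ℝ), p ≠ 0 →
    volume {x : Fin n → ℝ | MvPolynomial.eval x p = 0} = 0 := by
  intro n
  induction n with
  | zero =>
    intro p hp
    obtain ⟨c, rfl⟩ := MvPolynomial.C_surjective (Fin 0) p
    have hc : c ≠ 0 := fun h => hp (by rw [h, map_zero])
    convert measure_empty
    · rw [Set.eq_empty_iff_forall_notMem]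
      intro x hx
      exact hc (by simpa using hx)
    · infer_instance
  | succ n ih =>
    intro p hp
    set q := MvPolynomial.finSuccEquiv ℝ n p with hqdef
    have hq : q ≠ 0 := by
      intro h
      exact hp ((map_eq_zero_iff _ (MvPolynomial.finSuccEquiv ℝ n).injective).mp h)
    have hlc : q.leadingCoeff ≠ 0 := Polynomial.leadingCoeff_ne_zero.mpr hq
    have hmeas : Measurable (fun yz : (Fin n → ℝ) × ℝ =>
        MvPolynomial.eval (Fin.cons yz.2 yz.1 : Fin (n+1) → ℝ) p) := by
      have h1 : Measurable (fun yz : (Fin n → ℝ) × ℝ => (Fin.cons yz.2 yz.1 : Fin (n+1) → ℝ)) := by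
        apply measurable_pi_lambda
        intro i
        refine Fin.cases ?_ ?_ i
        · exact measurable_snd
        · intro j
          simp; exact (measurable_pi_apply j).comp measurable_fst
      exact (mvpoly_eval_measurable p).comp h1
    set B : Set ((Fin n → ℝ) × ℝ) :=
      {yz | MvPolynomial.eval (Fin.cons yz.2 yz.1 : Fin (n+1) → ℝ) p = 0} with hBdef
    have hBmeas : MeasurableSet B := hmeas (measurableSet_singleton 0)
    have hBnull : ((volume : Measure (Fin n → ℝ)).prod (volume : Measure ℝ)) B = 0 := by
      rw [MeasureTheory.Measure.measure_prod_null hBmeas]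
      have hae : ∀ᵐ s ∂(volume : Measure (Fin n → ℝ)),
          MvPolynomial.eval s q.leadingCoeff ≠ 0 := by
        have := ih q.leadingCoeff hlc
        rw [ae_iff]
        simpa using this
      filter_upwards [hae] with s hs
      have hmap : (q.map (MvPolynomial.eval s)) ≠ 0 := by
        intro h
        apply hs
        have : (q.map (MvPolynomial.eval s)).coeff q.natDegree = 0 := by rw [h]; simp
        rwa [Polynomial.coeff_map] at this
      have hsub : (Prod.mk s ⁻¹' B) ⊆ {y : ℝ | (q.map (MvPolynomial.eval s)).IsRoot y} := by
        intro y hy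
        simp only [hBdef, Set.mem_preimage, Set.mem_setOf_eq] at hy ⊢
        rw [MvPolynomial.eval_eq_eval_mv_eval'] at hy
        exact hy
      simp only [Pi.zero_apply]
      exact measure_mono_null hsub
        ((Polynomial.finite_setOf_isRoot hmap).countable.measure_zero _)
    have hswap : ((volume : Measure ℝ).prod (volume : Measure (Fin n → ℝ))) (Prod.swap ⁻¹' B) = 0 := by
      rw [← hBnull]
      conv_rhs => rw [← MeasureTheory.Measure.prod_swap]
      rw [Measure.map_apply measurable_swap hBmeas]
    have e := measurePreserving_piFinSuccAbove (fun _ : Fin (n+1) => (volume : Measure ℝ)) 0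
    have hA : {x : Fin (n+1) → ℝ | MvPolynomial.eval x p = 0}
        = (MeasurableEquiv.piFinSuccAbove (fun _ : Fin (n+1) => ℝ) 0) ⁻¹' (Prod.swap ⁻¹' B) := by
      ext x
      have hx : (Fin.cons (x 0) (Fin.removeNth 0 x) : Fin (n+1) → ℝ) = x := by
        ext i
        cases i using Fin.cases <;> simp [Fin.removeNth, Fin.tail]
      simp only [Set.mem_setOf_eq, Set.mem_preimage, MeasurableEquiv.piFinSuccAbove_apply, hBdef,
        Prod.swap, Fin.insertNthEquiv_symm_apply, hx]
    rw [hA]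
    rw [show (volume : Measure (Fin (n+1) → ℝ)) = Measure.pi (fun _ => volume) from rfl]
    rw [e.measure_preimage ((measurable_swap hBmeas).nullMeasurableSet)]
    convert hswap using 2
    rfl
open Matrix

noncomputable def Bmat {σ : Type} (n : ℕ) (M : Fin n → Fin (n+1) → σ) :
    Matrix (Fin (n+1)) (Fin (n+1)) (MvPolynomial σ ℝ) :=
  Matrix.of fun i j => if h : i = 0 then 1 else MvPolynomial.X (M (i.pred h) j)

lemma Bmat_zero {σ : Type} {n : ℕ} (M : Fin n → Fin (n+1) → σ) (j : Fin (n+1)) :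
    Bmat n M 0 j = 1 := by simp [Bmat]

lemma Bmat_succ {σ : Type} {n : ℕ} (M : Fin n → Fin (n+1) → σ) (i : Fin n) (j : Fin (n+1)) :
    Bmat n M i.succ j = MvPolynomial.X (M i j) := by
  simp [Bmat, Fin.succ_ne_zero]

lemma Bmat_ne_zero_row {σ : Type} {n : ℕ} (M : Fin n → Fin (n+1) → σ) (i : Fin (n+1))
    (h : i ≠ 0) (j : Fin (n+1)) : Bmat n M i j = MvPolynomial.X (M (i.pred h) j) := by
  simp [Bmat, h]

lemma det_single_row {R : Type*} [CommRing R] {n : ℕ} (A : Matrix (Fin (n+1)) (Fin (n+1)) R)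
    (i j : Fin (n+1)) (h : A i = Pi.single j 1) :
    A.det = (-1)^((i:ℕ)+(j:ℕ)) * (A.submatrix i.succAbove j.succAbove).det := by
  rw [Matrix.det_succ_row A i, Finset.sum_eq_single j]
  · rw [h]; simp
  · intro b _ hb
    rw [h, Pi.single_eq_of_ne hb]
    ring
  · simp

lemma updateRow_comm' {R : Type*} {m' α : Type*} [DecidableEq m'] (A : Matrix m' α R)
    {i₁ i₂ : m'} (h : i₁ ≠ i₂) (r₁ r₂ : α → R) :
    updateRow (updateRow A i₁ r₁) i₂ r₂ = updateRow (updateRow A i₂ r₂) i₁ r₁ := by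
  ext i j
  simp only [Matrix.updateRow_apply]
  split_ifs with h1 h2 <;> simp_all

lemma C_comp_single {A : Type*} [CommRing A] {ι : Type*} [DecidableEq ι] (j : ι) :
    (Polynomial.C ∘ (Pi.single j (1:A))) = Pi.single j (1 : Polynomial A) := by
  funext x
  simp only [Function.comp_apply, Pi.single_apply]
  split_ifs <;> simp

lemma detB_ne_zero {σ : Type} [DecidableEq σ] : ∀ (n : ℕ) (M : Fin n → Fin (n+1) → σ),
    (∀ i j j', j ≠ j' → M i j ≠ M i j') →
    (∀ i i' j, i ≠ i' → M i j ≠ M i' j) →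
    (∀ v : σ, (Finset.univ.filter (fun p : Fin n × Fin (n+1) => M p.1 p.2 = v)).card ≤ 2) →
    (Bmat n M).det ≠ 0 := by
  intro n
  induction n using Nat.strong_induction_on with
  | _ n IH =>
  intro M hrow hcol htwice
  rcases n with _ | m
  · rw [Matrix.det_fin_one, Bmat_zero]
    exact one_ne_zero
  set u := M 0 0 with hu
  set φ : MvPolynomial σ ℝ →+* Polynomial (MvPolynomial σ ℝ) :=
    (MvPolynomial.eval₂Hom (Polynomial.C.comp MvPolynomial.C)
      (fun v => if v = u then Polynomial.X else Polynomial.C (MvPolynomial.X v))) with hφdef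
  have hφX : ∀ v, φ (MvPolynomial.X v)
      = if v = u then Polynomial.X else Polynomial.C (MvPolynomial.X v) := by
    intro v
    rw [hφdef]
    exact MvPolynomial.eval₂Hom_X' _ _ v
  have hφXu : φ (MvPolynomial.X u) = Polynomial.X := by rw [hφX, if_pos rfl]
  have hφXne : ∀ v, v ≠ u → φ (MvPolynomial.X v) = Polynomial.C (MvPolynomial.X v) := by
    intro v hv; rw [hφX, if_neg hv]
  intro hdet0
  have hD : ((Bmat (m+1) M).map φ).det = 0 := by
    rw [← RingHom.mapMatrix_apply, ← RingHom.map_det, hdet0, map_zero]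
  by_cases hsingle : ∀ p : Fin (m+1) × Fin (m+2), M p.1 p.2 = u → p = (0, 0)
  · -- u occurs exactly once, at position (0,0)
    set R1 : Fin (m+2) := (0 : Fin (m+1)).succ with hR1
    have hR1ne0 : R1 ≠ 0 := Fin.succ_ne_zero 0
    set B := Bmat (m+1) M with hB
    set G : Matrix (Fin (m+2)) (Fin (m+2)) (MvPolynomial σ ℝ) :=
      updateRow B R1 (Function.update (B R1) (0:Fin (m+2)) 0) with hG
    have hGoff : ∀ i, i ≠ R1 → G i = B i := fun i hi => updateRow_ne hi
    have hkey : B.map φ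
        = updateRow (G.map Polynomial.C) R1
            ((Polynomial.C ∘ G R1) + (Polynomial.X : Polynomial (MvPolynomial σ ℝ)) • (Pi.single (0:Fin (m+2)) 1 : Fin (m+2) → Polynomial (MvPolynomial σ ℝ))) := by
      apply Matrix.ext
      intro i j
      by_cases hi : i = R1
      · subst hi
        rw [updateRow_self]
        by_cases hj : j = (0:Fin (m+2))
        · subst hj
          have h1 : B R1 (0:Fin (m+2)) = MvPolynomial.X u := by
            rw [hB, hR1, Bmat_succ, hu]
          have h2 : G R1 (0:Fin (m+2)) = 0 := by rw [hG, updateRow_self, Function.update_self]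
          simp [Matrix.map_apply, h1, h2, hφXu]
        · have h1 : B R1 j = MvPolynomial.X (M 0 j) := by rw [hB, hR1, Bmat_succ]
          have h2 : G R1 j = B R1 j := by rw [hG, updateRow_self, Function.update_of_ne hj]
          have h3 : M 0 j ≠ u := by rw [hu]; exact hrow 0 j 0 hj
          simp [Matrix.map_apply, h1, h2, hφXne _ h3, Pi.single_eq_of_ne hj]
      · rw [updateRow_ne hi, Matrix.map_apply, Matrix.map_apply, hGoff i hi]
        by_cases hi0 : i = 0
        · subst hi0
          simp [hB, Bmat_zero]
        · rw [hB, Bmat_ne_zero_row M i hi0]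
          have hne : M (i.pred hi0) j ≠ u := by
            intro hMu
            have h4 := hsingle (i.pred hi0, j) hMu
            apply hi
            have h0 : i.pred hi0 = 0 := congrArg Prod.fst h4
            rw [hR1, ← h0, Fin.succ_pred]
          rw [hφXne _ hne]
    have hmapdet1 : ∀ w₁ : Fin (m+2) → MvPolynomial σ ℝ,
        (updateRow (G.map Polynomial.C) R1 (Polynomial.C ∘ w₁)).det
          = Polynomial.C ((updateRow G R1 w₁).det) := by
      intro w₁
      rw [← Matrix.map_updateRow, ← RingHom.mapMatrix_apply, ← RingHom.map_det]
    have hexp : (B.map φ).det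
        = Polynomial.C ((updateRow G R1 (G R1)).det)
          + Polynomial.C ((updateRow G R1 (Pi.single (0:Fin (m+2)) 1)).det) * Polynomial.X ^ 1 := by
      rw [hkey, det_updateRow_add, det_updateRow_smul, ← C_comp_single (0:Fin (m+2)),
        hmapdet1, hmapdet1]
      ring
    have hd1 : (updateRow G R1 (Pi.single (0:Fin (m+2)) 1)).det = 0 := by
      have h0 : Polynomial.C ((updateRow G R1 (G R1)).det)
          + Polynomial.C ((updateRow G R1 (Pi.single (0:Fin (m+2)) 1)).det) * Polynomial.X ^ 1 = 0 := by
        rw [← hexp]; exact hD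
      have hc := congrArg (fun p => Polynomial.coeff p 1) h0
      simpa [Polynomial.coeff_mul_X_pow', Polynomial.coeff_C] using hc
    -- collapse along the single row
    set E := updateRow G R1 (Pi.single (0:Fin (m+2)) 1) with hE
    have hErow : E R1 = Pi.single (0:Fin (m+2)) 1 := updateRow_self
    rw [det_single_row E R1 (0:Fin (m+2)) hErow] at hd1
    have hd2 : (E.submatrix R1.succAbove (0:Fin (m+2)).succAbove).det = 0 := by
      rcases mul_eq_zero.mp hd1 with h | h
      · exact absurd h (pow_ne_zero _ (neg_ne_zero.mpr one_ne_zero))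
      · exact h
    -- identify the minor
    have hne0 : ∀ q : Fin m, R1.succAbove q.succ ≠ 0 :=
      fun q => Fin.succAbove_ne_zero hR1ne0 (Fin.succ_ne_zero q)
    set τ : Fin m → Fin (m+1) := fun q => (R1.succAbove q.succ).pred (hne0 q) with hτdef
    set M' : Fin m → Fin (m+1) → σ := fun q j => M (τ q) ((0:Fin (m+2)).succAbove j) with hM'
    have hτinj : Function.Injective τ := by
      intro q q' h
      have h2 := congrArg Fin.succ h
      rw [hτdef] at h2
      simp only [Fin.succ_pred] at h2
      exact Fin.succ_injective _ (Fin.succAbove_right_injective h2)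
    have hE1 : E.submatrix R1.succAbove (0:Fin (m+2)).succAbove = Bmat m M' := by
      ext i j
      refine Fin.cases ?_ ?_ i
      · have h0 : R1.succAbove 0 = 0 := Fin.succAbove_ne_zero_zero hR1ne0
        rw [submatrix_apply, h0, hE, updateRow_ne (Ne.symm hR1ne0), hGoff _ (Ne.symm hR1ne0),
          hB, Bmat_zero, Bmat_zero]
      · intro q
        have hne : R1.succAbove q.succ ≠ R1 := Fin.succAbove_ne R1 q.succ
        rw [submatrix_apply, hE, updateRow_ne hne, hGoff _ hne, hB,
          Bmat_ne_zero_row M _ (hne0 q), Bmat_succ]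
    rw [hE1] at hd2
    refine IH m (Nat.lt_succ_self m) M' ?_ ?_ ?_ hd2
    · intro q j j' hjj'
      exact hrow (τ q) _ _ (fun h => hjj' (Fin.succAbove_right_injective h))
    · intro q q' j hqq'
      exact hcol _ _ _ (fun h => hqq' (hτinj h))
    · intro v
      refine le_trans (Finset.card_le_card_of_injOn
        (fun p => (τ p.1, (0:Fin (m+2)).succAbove p.2)) ?_ ?_) (htwice v)
      · intro p hp
        simp only [Finset.mem_coe, Finset.mem_filter, Finset.mem_univ, true_and] at hp ⊢
        exact hp
      · intro p _ p' _ h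
        rw [Prod.ext_iff] at h
        exact Prod.ext (hτinj h.1) (Fin.succAbove_right_injective (p := (0:Fin (m+2))) h.2)
  · -- u occurs twice
    push_neg at hsingle
    obtain ⟨⟨a, b⟩, hab, habne⟩ := hsingle
    have honly : ∀ p : Fin (m+1) × Fin (m+2), M p.1 p.2 = u → p = (0, 0) ∨ p = (a, b) := by
      intro p hp
      by_contra hcon
      push_neg at hcon
      have hsub : ({p, (0,0), (a,b)} : Finset (Fin (m+1) × Fin (m+2)))
          ⊆ Finset.univ.filter (fun q : Fin (m+1) × Fin (m+2) => M q.1 q.2 = u) := by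
        intro x hx
        simp only [Finset.mem_insert, Finset.mem_singleton] at hx
        rcases hx with rfl | rfl | rfl <;>
          simp only [Finset.mem_filter, Finset.mem_univ, true_and] <;>
          first | exact hp | exact hu.symm | exact hab
      have h3 : ({p, (0,0), (a,b)} : Finset (Fin (m+1) × Fin (m+2))).card = 3 := by
        have hnm1 : p ∉ ({(0,0),(a,b)} : Finset (Fin (m+1) × Fin (m+2))) := by
          simp only [Finset.mem_insert, Finset.mem_singleton, not_or]
          exact ⟨hcon.1, hcon.2⟩
        have hnm2 : ((0,0) : Fin (m+1) × Fin (m+2)) ∉ ({(a,b)} : Finset (Fin (m+1) × Fin (m+2))) := by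
          simp only [Finset.mem_singleton]
          intro h
          exact habne h.symm
        rw [Finset.card_insert_of_notMem hnm1, Finset.card_insert_of_notMem hnm2,
          Finset.card_singleton]
      have hle : (Finset.univ.filter
          (fun q : Fin (m+1) × Fin (m+2) => M q.1 q.2 = u)).card ≤ 2 := htwice u
      have hge := Finset.card_le_card hsub
      rw [h3] at hge
      omega
    have ha0 : a ≠ 0 := by
      intro h
      subst h
      have hb0 : b ≠ 0 := fun h => habne (by rw [h])
      exact hrow 0 b 0 hb0 (hab.trans hu)
    have hb0 : b ≠ 0 := by
      intro h
      subst h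
      exact hcol a 0 0 ha0 (hab.trans hu)
    rcases m with _ | m'
    · exact ha0 (Fin.ext (by have := a.isLt; omega))
    set R1 : Fin (m'+3) := (0 : Fin (m'+2)).succ with hR1
    set R2 : Fin (m'+3) := a.succ with hR2
    have hR1ne0 : R1 ≠ 0 := Fin.succ_ne_zero _
    have hR2ne0 : R2 ≠ 0 := Fin.succ_ne_zero _
    have hR12 : R1 ≠ R2 := by
      rw [hR1, hR2]
      intro h
      exact ha0 (Fin.succ_injective _ h).symm
    set B := Bmat (m'+2) M with hB
    set G : Matrix (Fin (m'+3)) (Fin (m'+3)) (MvPolynomial σ ℝ) :=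
      updateRow (updateRow B R1 (Function.update (B R1) 0 0)) R2
        (Function.update (B R2) b 0) with hG
    have hGoff : ∀ i, i ≠ R1 → i ≠ R2 → G i = B i := by
      intro i h1 h2
      rw [hG, updateRow_ne h2, updateRow_ne h1]
    have hGR1 : G R1 = Function.update (B R1) 0 0 := by
      rw [hG, updateRow_ne hR12, updateRow_self]
    have hGR2 : G R2 = Function.update (B R2) b 0 := by rw [hG, updateRow_self]
    have hkey : B.map φ
        = updateRow (updateRow (G.map Polynomial.C) R2
            ((Polynomial.C ∘ G R2) + (Polynomial.X : Polynomial (MvPolynomial σ ℝ)) •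
              (Polynomial.C ∘ (Pi.single b 1 : Fin (m'+3) → MvPolynomial σ ℝ)))) R1
            ((Polynomial.C ∘ G R1) + (Polynomial.X : Polynomial (MvPolynomial σ ℝ)) •
              (Polynomial.C ∘ (Pi.single (0:Fin (m'+3)) 1 : Fin (m'+3) → MvPolynomial σ ℝ))) := by
      apply Matrix.ext
      intro i j
      by_cases hi1 : i = R1
      · subst hi1
        rw [updateRow_self]
        by_cases hj : j = (0:Fin (m'+3))
        · subst hj
          have h1 : B R1 (0:Fin (m'+3)) = MvPolynomial.X u := by
            rw [hB, hR1, Bmat_succ, hu]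
          have h2 : G R1 (0:Fin (m'+3)) = 0 := by rw [hGR1, Function.update_self]
          simp [Matrix.map_apply, h1, h2, hφXu]
        · have h1 : B R1 j = MvPolynomial.X (M 0 j) := by rw [hB, hR1, Bmat_succ]
          have h2 : G R1 j = B R1 j := by rw [hGR1, Function.update_of_ne hj]
          have h3 : M 0 j ≠ u := by rw [hu]; exact hrow 0 j 0 hj
          simp [Matrix.map_apply, h1, h2, hφXne _ h3, Pi.single_eq_of_ne hj]
      · rw [updateRow_ne hi1]
        by_cases hi2 : i = R2
        · subst hi2
          rw [updateRow_self]
          by_cases hj : j = b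
          · subst hj
            have h1 : B R2 j = MvPolynomial.X u := by rw [hB, hR2, Bmat_succ, hab]
            have h2 : G R2 j = 0 := by rw [hGR2, Function.update_self]
            simp [Matrix.map_apply, h1, h2, hφXu]
          · have h1 : B R2 j = MvPolynomial.X (M a j) := by rw [hB, hR2, Bmat_succ]
            have h2 : G R2 j = B R2 j := by rw [hGR2, Function.update_of_ne hj]
            have h3 : M a j ≠ u := by
              intro hMu
              rcases honly (a, j) hMu with h | h
              · exact ha0 (congrArg Prod.fst h)
              · exact hj (congrArg Prod.snd h)
            simp [Matrix.map_apply, h1, h2, hφXne _ h3, Pi.single_eq_of_ne hj]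
        · rw [updateRow_ne hi2, Matrix.map_apply, Matrix.map_apply, hGoff i hi1 hi2]
          by_cases hi0 : i = 0
          · subst hi0
            simp [hB, Bmat_zero]
          · rw [hB, Bmat_ne_zero_row M i hi0]
            have hne : M (i.pred hi0) j ≠ u := by
              intro hMu
              rcases honly (i.pred hi0, j) hMu with h | h
              · apply hi1
                have h0 : i.pred hi0 = 0 := congrArg Prod.fst h
                rw [hR1, ← h0, Fin.succ_pred]
              · apply hi2
                have h0 : i.pred hi0 = a := congrArg Prod.fst h
                rw [hR2, ← h0, Fin.succ_pred]
            rw [hφXne _ hne]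
    have hmapdet2 : ∀ w₁ w₂ : Fin (m'+3) → MvPolynomial σ ℝ,
        (updateRow (updateRow (G.map Polynomial.C) R1 (Polynomial.C ∘ w₁)) R2
          (Polynomial.C ∘ w₂)).det
          = Polynomial.C ((updateRow (updateRow G R1 w₁) R2 w₂).det) := by
      intro w₁ w₂
      rw [← Matrix.map_updateRow, ← Matrix.map_updateRow, ← RingHom.mapMatrix_apply,
        ← RingHom.map_det]
    have hexp : (B.map φ).det
        = Polynomial.C ((updateRow (updateRow G R1 (G R1)) R2 (G R2)).det)
          + (Polynomial.C ((updateRow (updateRow G R1 (G R1)) R2 (Pi.single b 1)).det)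
             + Polynomial.C ((updateRow (updateRow G R1 (Pi.single 0 1)) R2 (G R2)).det))
            * Polynomial.X ^ 1
          + Polynomial.C ((updateRow (updateRow G R1 (Pi.single 0 1)) R2
              (Pi.single b 1)).det) * Polynomial.X ^ 2 := by
      rw [hkey, det_updateRow_add, det_updateRow_smul,
        updateRow_comm' (G.map Polynomial.C) (Ne.symm hR12),
        updateRow_comm' (G.map Polynomial.C) (Ne.symm hR12),
        det_updateRow_add, det_updateRow_add, det_updateRow_smul, det_updateRow_smul,
        hmapdet2, hmapdet2, hmapdet2, hmapdet2]
      ring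
    have hd11 : (updateRow (updateRow G R1 (Pi.single 0 1)) R2 (Pi.single b 1)).det = 0 := by
      have h0 : Polynomial.C ((updateRow (updateRow G R1 (G R1)) R2 (G R2)).det)
          + (Polynomial.C ((updateRow (updateRow G R1 (G R1)) R2 (Pi.single b 1)).det)
             + Polynomial.C ((updateRow (updateRow G R1 (Pi.single 0 1)) R2 (G R2)).det))
            * Polynomial.X ^ 1
          + Polynomial.C ((updateRow (updateRow G R1 (Pi.single 0 1)) R2
              (Pi.single b 1)).det) * Polynomial.X ^ 2 = 0 := by
        rw [← hexp]; exact hD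
      have hc := congrArg (fun p => Polynomial.coeff p 2) h0
      simpa [Polynomial.coeff_mul_X_pow', Polynomial.coeff_C] using hc
    set E := updateRow (updateRow G R1 (Pi.single 0 1)) R2 (Pi.single b 1) with hE
    have hErow1 : E R1 = Pi.single 0 1 := by
      rw [hE, updateRow_ne hR12, updateRow_self]
    rw [det_single_row E R1 0 hErow1] at hd11
    have hd12 : (E.submatrix R1.succAbove (0:Fin (m'+3)).succAbove).det = 0 := by
      rcases mul_eq_zero.mp hd11 with h | h
      · exact absurd h (pow_ne_zero _ (neg_ne_zero.mpr one_ne_zero))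
      · exact h
    obtain ⟨p₂, hp₂⟩ := Fin.exists_succAbove_eq (Ne.symm hR12)
    obtain ⟨c₂, hc₂⟩ := Fin.exists_succAbove_eq hb0
    have hp₂ne0 : p₂ ≠ 0 := by
      intro h
      rw [h, Fin.succAbove_ne_zero_zero hR1ne0] at hp₂
      exact hR2ne0 hp₂.symm
    have hE1row : (E.submatrix R1.succAbove (0:Fin (m'+3)).succAbove) p₂ = Pi.single c₂ 1 := by
      funext j
      rw [submatrix_apply, hp₂, hE, updateRow_self, ← hc₂]
      simp [Pi.single_apply, Fin.succAbove_right_inj]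
    rw [det_single_row _ p₂ c₂ hE1row] at hd12
    have hd13 : ((E.submatrix R1.succAbove (0:Fin (m'+3)).succAbove).submatrix
        p₂.succAbove c₂.succAbove).det = 0 := by
      rcases mul_eq_zero.mp hd12 with h | h
      · exact absurd h (pow_ne_zero _ (neg_ne_zero.mpr one_ne_zero))
      · exact h
    have hρne0 : ∀ q : Fin m', R1.succAbove (p₂.succAbove q.succ) ≠ 0 := fun q =>
      Fin.succAbove_ne_zero hR1ne0 (Fin.succAbove_ne_zero hp₂ne0 (Fin.succ_ne_zero q))
    set τ : Fin m' → Fin (m'+2) :=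
      fun q => (R1.succAbove (p₂.succAbove q.succ)).pred (hρne0 q) with hτdef
    set γ : Fin (m'+1) → Fin (m'+3) :=
      fun j => (0:Fin (m'+3)).succAbove (c₂.succAbove j) with hγdef
    set M'' : Fin m' → Fin (m'+1) → σ := fun q j => M (τ q) (γ j) with hM''
    have hτinj : Function.Injective τ := by
      intro q q' h
      have h2 := congrArg Fin.succ h
      rw [hτdef] at h2
      simp only [Fin.succ_pred] at h2
      exact Fin.succ_injective _ (Fin.succAbove_right_injective
        (Fin.succAbove_right_injective h2))
    have hγinj : Function.Injective γ := by
      intro j j' h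
      rw [hγdef] at h
      exact Fin.succAbove_right_injective (Fin.succAbove_right_injective h)
    have hE2 : (E.submatrix R1.succAbove (0:Fin (m'+3)).succAbove).submatrix
        p₂.succAbove c₂.succAbove = Bmat m' M'' := by
      apply Matrix.ext
      intro i j
      refine Fin.cases ?_ ?_ i
      · have h1 : p₂.succAbove 0 = 0 := Fin.succAbove_ne_zero_zero hp₂ne0
        have h2 : R1.succAbove 0 = 0 := Fin.succAbove_ne_zero_zero hR1ne0
        rw [submatrix_apply, submatrix_apply, h1, h2, hE,
          updateRow_ne (Ne.symm hR2ne0), updateRow_ne (Ne.symm hR1ne0),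
          hGoff _ (Ne.symm hR1ne0) (Ne.symm hR2ne0), hB, Bmat_zero, Bmat_zero]
      · intro q
        have hri1 : R1.succAbove (p₂.succAbove q.succ) ≠ R1 := Fin.succAbove_ne _ _
        have hri2 : R1.succAbove (p₂.succAbove q.succ) ≠ R2 := by
          intro h
          rw [← hp₂] at h
          exact Fin.succAbove_ne p₂ q.succ (Fin.succAbove_right_injective (p := R1) h)
        rw [submatrix_apply, submatrix_apply, hE, updateRow_ne hri2, updateRow_ne hri1,
          hGoff _ hri1 hri2, hB, Bmat_ne_zero_row M _ (hρne0 q), Bmat_succ]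
    rw [hE2] at hd13
    refine IH m' (by omega) M'' ?_ ?_ ?_ hd13
    · intro q j j' hjj'
      exact hrow (τ q) _ _ (fun h => hjj' (hγinj h))
    · intro q q' j hqq'
      exact hcol _ _ _ (fun h => hqq' (hτinj h))
    · intro v
      refine le_trans (Finset.card_le_card_of_injOn
        (fun p => (τ p.1, γ p.2)) ?_ ?_) (htwice v)
      · intro p hp
        simp only [Finset.mem_coe, Finset.mem_filter, Finset.mem_univ, true_and] at hp ⊢
        exact hp
      · intro p _ p' _ h
        rw [Prod.ext_iff] at h
        exact Prod.ext (hτinj h.1) (hγinj h.2)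

/-- Let `k ≥ max{l,2}` and let `M` be a `(k-1) × l` matrix with entries in
`{1,...,r}` (here `Fin r`) such that every value occurs, no value appears twice in any
row or column, and each value appears at most twice in `M`. Then for Lebesgue-almost all
`(t₁,...,t_r) ∈ [0,1]^r` the columns of `A(t) = (t_{M(i,j)})` are affinely independent. -/
theorem stmt3 (k l r : ℕ) (hk2 : 2 ≤ k) (hlk : l ≤ k) (hl : 0 < l) (hr : 0 < r)
    (M : Fin (k-1) → Fin l → Fin r)
    (hsurj : ∀ v : Fin r, ∃ i j, M i j = v)
    (hrow : ∀ i j j', j ≠ j' → M i j ≠ M i j')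
    (hcol : ∀ i i' j, i ≠ i' → M i j ≠ M i' j)
    (htwice : ∀ v : Fin r,
      (Finset.univ.filter (fun p : Fin (k-1) × Fin l => M p.1 p.2 = v)).card ≤ 2) :
    ∀ᵐ t ∂((volume : Measure (Fin r → ℝ)).restrict {t | ∀ i, t i ∈ Set.Icc (0:ℝ) 1}),
      AffineIndependent ℝ (fun j : Fin l => (fun i : Fin (k-1) => t (M i j) : Fin (k-1) → ℝ)) := by
  obtain ⟨n, rfl⟩ : ∃ n, l = n + 1 := ⟨l - 1, (Nat.succ_pred_eq_of_pos hl).symm⟩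
  have hnk : n ≤ k - 1 := by omega
  set M₀ : Fin n → Fin (n+1) → Fin r := fun i j => M (Fin.castLE hnk i) j with hM₀
  have hdet : (Bmat n M₀).det ≠ 0 := by
    apply detB_ne_zero n M₀
    · exact fun i j j' h => hrow _ _ _ h
    · exact fun i i' j hii' => hcol _ _ _ (fun h => hii' (Fin.castLE_injective hnk h))
    · intro v
      refine le_trans (Finset.card_le_card_of_injOn
        (fun p => (Fin.castLE hnk p.1, p.2)) ?_ ?_) (htwice v)
      · intro p hp
        simp only [Finset.mem_coe, Finset.mem_filter, Finset.mem_univ, true_and] at hp ⊢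
        exact hp
      · intro p _ p' _ h
        rw [Prod.ext_iff] at h
        exact Prod.ext (Fin.castLE_injective hnk h.1) h.2
  have hnull := mvpoly_zero_set_null r (Bmat n M₀).det hdet
  have hae : ∀ᵐ t ∂(volume : Measure (Fin r → ℝ)),
      AffineIndependent ℝ (fun j : Fin (n+1) => (fun i : Fin (k-1) => t (M i j) : Fin (k-1) → ℝ)) := by
    have h1 : ∀ᵐ t ∂(volume : Measure (Fin r → ℝ)),
        MvPolynomial.eval t (Bmat n M₀).det ≠ 0 := by
      rw [ae_iff]
      simpa using hnull
    filter_upwards [h1] with t ht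
    rw [affineIndependent_iff_of_fintype]
    intro w hw hvsub
    by_contra hcon
    push_neg at hcon
    obtain ⟨i₀, hi₀⟩ := hcon
    apply ht
    have hlin : ∑ j, w j • (fun i : Fin (k-1) => t (M i j)) = (0 : Fin (k-1) → ℝ) := by
      rw [Finset.weightedVSub_eq_linear_combination _ hw] at hvsub
      exact hvsub
    have hcoord : ∀ q : Fin n, ∑ j, w j * t (M (Fin.castLE hnk q) j) = 0 := by
      intro q
      have h2 := congrFun hlin (Fin.castLE hnk q)
      simpa [Finset.sum_apply] using h2
    have hwne : w ≠ 0 := fun h => hi₀ (by rw [h]; rfl)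
    have hmv : ((Bmat n M₀).map (MvPolynomial.eval t)).mulVec w = 0 := by
      funext i
      refine Fin.cases ?_ ?_ i
      · simpa [Matrix.mulVec, dotProduct, Matrix.map_apply, Bmat_zero] using hw
      · intro q
        have h3 := hcoord q
        simpa [Matrix.mulVec, dotProduct, Matrix.map_apply, Bmat_succ,
          mul_comm] using h3
    have hdet0 : ((Bmat n M₀).map (MvPolynomial.eval t)).det = 0 :=
      Matrix.exists_mulVec_eq_zero_iff.mp ⟨w, hwne, hmv⟩
    rw [← RingHom.mapMatrix_apply, ← RingHom.map_det] at hdet0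
    exact hdet0
  exact ae_restrict_of_ae hae
end

section
/- Let ε > 0, m a positive integer, X a compact metric space, and B a closed subset of X. Let f' : B → [0,1]^m and f̃ : X → [0,1]^m be continuous with ‖f'(x) − f̃(x)‖_∞ < ε for all x ∈ B. Then there exists a continuous function f : X → [0,1]^m with f|_B = f' and ‖f(x) − f̃(x)‖_∞ < ε for all x ∈ X. -/
/-!
Extend `f' - f̃` by Tietze into the open `ε`-ball, which is itself a Tietze extension space in
finite dimension, and add `f̃`. Clamping the result coordinatewise to `[0, 1]` does not move
`f'` or `f̃`, which take values in the cube, and is `1`-Lipschitz for the sup norm, so the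
clamped extension stays `ε`-close to `f̃`.
-/

open Set

theorem ContinuousMap.exists_extension_norm_sub_lt {X E : Type*} [TopologicalSpace X]
    [NormalSpace X] [NormedAddCommGroup E] [NormedSpace ℝ E] [FiniteDimensional ℝ E]
    {s : Set X} (hs : IsClosed s) (f : C(s, E)) (g : C(X, E)) {ε : ℝ} (hε : 0 < ε)
    (hfg : ∀ x : s, ‖f x - g x‖ < ε) :
    ∃ F : C(X, E), F.restrict s = f ∧ ∀ x, ‖F x - g x‖ < ε := by
  have := Metric.instTietzeExtensionBall (𝕜 := ℝ) (E := E) hε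
  obtain ⟨D, hD_mem, hD_restrict⟩ :=
    (f - g.restrict s).exists_forall_mem_restrict_eq hs (t := Metric.ball 0 ε)
      (by simpa using hfg)
  refine ⟨D + g, ?_, fun x => by simpa using hD_mem x⟩
  ext x
  simpa using congr($hD_restrict x + g x)

noncomputable def clampIcc {ι : Type*} (a b : ℝ) (h : a ≤ b) (y : ι → ℝ) : ι → ℝ :=
  fun i => projIcc a b h (y i)

section clampIcc

variable {ι : Type*} {a b : ℝ} (h : a ≤ b)

theorem continuous_clampIcc : Continuous (clampIcc (ι := ι) a b h) :=
  continuous_pi fun i => continuous_subtype_val.comp (continuous_projIcc.comp (continuous_apply i))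

theorem clampIcc_mem (y : ι → ℝ) (i : ι) : clampIcc a b h y i ∈ Icc a b :=
  (projIcc a b h (y i)).2

theorem clampIcc_eq_self {y : ι → ℝ} (hy : ∀ i, y i ∈ Icc a b) : clampIcc a b h y = y :=
  funext fun i => congrArg Subtype.val (projIcc_of_mem h (hy i))

theorem norm_clampIcc_sub_clampIcc_le [Fintype ι] (y z : ι → ℝ) :
    ‖clampIcc a b h y - clampIcc a b h z‖ ≤ ‖y - z‖ :=
  (pi_norm_le_iff_of_nonneg (norm_nonneg _)).2 fun i =>
    (abs_projIcc_sub_projIcc h).trans (norm_le_pi_norm (y - z) i)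

end clampIcc

theorem stmt4_general {X : Type*} [MetricSpace X]
    (ε : ℝ) (hε : 0 < ε) (m : ℕ)
    (B : Set X) (hB : IsClosed B)
    (f' : B → Fin m → ℝ) (hf' : Continuous f')
    (hf'r : ∀ x i, f' x i ∈ Set.Icc (0:ℝ) 1)
    (ftil : X → Fin m → ℝ) (hftil : Continuous ftil)
    (hftilr : ∀ x i, ftil x i ∈ Set.Icc (0:ℝ) 1)
    (hclose : ∀ x : B, ‖f' x - ftil x‖ < ε) :
    ∃ f : X → Fin m → ℝ, Continuous f ∧ (∀ x i, f x i ∈ Set.Icc (0:ℝ) 1) ∧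
      (∀ x : B, f x = f' x) ∧ ∀ x : X, ‖f x - ftil x‖ < ε := by
  obtain ⟨F, hF_restrict, hF_close⟩ :=
    ContinuousMap.exists_extension_norm_sub_lt hB ⟨f', hf'⟩ ⟨ftil, hftil⟩ hε hclose
  refine ⟨fun x => clampIcc 0 1 zero_le_one (F x), (continuous_clampIcc _).comp F.continuous,
    fun x => clampIcc_mem _ (F x), fun x => ?_, fun x => ?_⟩
  · have hFx : F x = f' x := congrFun (congrArg DFunLike.coe hF_restrict) x
    simp only [hFx, clampIcc_eq_self _ (hf'r x)]
  · calc ‖clampIcc 0 1 zero_le_one (F x) - ftil x‖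
        = ‖clampIcc 0 1 zero_le_one (F x) - clampIcc 0 1 zero_le_one (ftil x)‖ := by
          rw [clampIcc_eq_self _ (hftilr x)]
      _ ≤ ‖F x - ftil x‖ := norm_clampIcc_sub_clampIcc_le _ _ _
      _ < ε := hF_close x

/-- Controlled Tietze extension: a continuous `f' : B → [0,1]^m` on a closed
subset `B` of a compact metric space that is uniformly `ε`-close to a continuous
`f̃ : X → [0,1]^m` extends to a continuous `f : X → [0,1]^m` that is `ε`-close to `f̃`. -/
theorem stmt4 {X : Type*} [MetricSpace X] [CompactSpace X]
    (ε : ℝ) (hε : 0 < ε) (m : ℕ) (hm : 0 < m)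
    (B : Set X) (hB : IsClosed B)
    (f' : B → Fin m → ℝ) (hf' : Continuous f')
    (hf'r : ∀ x i, f' x i ∈ Set.Icc (0:ℝ) 1)
    (ftil : X → Fin m → ℝ) (hftil : Continuous ftil)
    (hftilr : ∀ x i, ftil x i ∈ Set.Icc (0:ℝ) 1)
    (hclose : ∀ x : B, ‖f' x - ftil x‖ < ε) :
    ∃ f : X → Fin m → ℝ, Continuous f ∧ (∀ x i, f x i ∈ Set.Icc (0:ℝ) 1) ∧
      (∀ x : B, f x = f' x) ∧ ∀ x : X, ‖f x - ftil x‖ < ε :=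
  stmt4_general ε hε m B hB f' hf' hf'r ftil hftil hftilr hclose
end

section
/- Every irrational rotation ℤ^k-action on the k-torus 𝕋^k, given by (n₁,...,n_k)·(x₁,...,x_k) = (x₁+n₁α₁, ..., x_k+n_kα_k) for irrational numbers α₁,...,α_k, has topological Rokhlin dimension at most 2^k − 1: for every n ∈ ℕ there exist 2^k open sets U₁,...,U_{2^k} in 𝕋^k such that for each i, the translates {g·U̅_i}_{g ∈ {0,...,n−1}^k} are pairwise disjoint, and the union ∪_i ∪_{g ∈ {0,...,n−1}^k} g·U_i covers 𝕋^k. -/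
/-!
Rokhlin towers multiply: if every factor of a product action has open sets whose `[n]`-towers
have disjoint closures and cover, the boxes built from them do the same for the product action.
So it suffices to find two such sets for one irrational rotation `x ↦ x + θ`. Pick `q` with
`β = qθ` just above `1/n` modulo `1`; multiplication by `q` intertwines the rotations by `θ` and
by `β`, so preimages of towers for `β` are towers for `θ`. For `β` take the balls of radius
`1/(3n)` about `0` and `β/2`: the points `mβ`, `m < n`, are more than `2/(3n)` apart, and since
`nβ ≥ 1` the `2n` centres `kβ/2`, `k < 2n`, are close enough to sweep out the whole circle.
-/

open Set Metric Function

/-- With `ι` of size `d + 1`, this witnesses Rokhlin dimension at most `d` for the shape `s`. -/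
structure IsRokhlinCover {X G ι : Type*} [TopologicalSpace X] (T : G → X → X) (s : Set G)
    (U : ι → Set X) : Prop where
  isOpen : ∀ i, IsOpen (U i)
  pairwiseDisjoint : ∀ i, s.PairwiseDisjoint fun g => T g '' closure (U i)
  cover : ∀ x, ∃ i, ∃ g ∈ s, x ∈ T g '' U i

namespace IsRokhlinCover

theorem preimage {X Y G ι : Type*} [TopologicalSpace X] [TopologicalSpace Y]
    {T : G → X → X} {S : G → Y → Y} {s : Set G} {V : ι → Set Y}
    (hV : IsRokhlinCover S s V) {f : X → Y} (hf : Continuous f)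
    (hfT : ∀ g x, f (T g x) = S g (f x)) (hT : ∀ g, Surjective (T g))
    (hS : ∀ g, Injective (S g)) :
    IsRokhlinCover T s fun i => f ⁻¹' V i where
  isOpen i := (hV.isOpen i).preimage hf
  pairwiseDisjoint i g hg g' hg' hne := by
    have hmaps : ∀ g, T g '' closure (f ⁻¹' V i) ⊆ f ⁻¹' (S g '' closure (V i)) := by
      rintro g _ ⟨x, hx, rfl⟩
      rw [mem_preimage, hfT]
      exact mem_image_of_mem (S g) (hf.closure_preimage_subset _ hx)
    exact ((hV.pairwiseDisjoint i hg hg' hne).preimage f).mono (hmaps g) (hmaps g')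
  cover x := by
    obtain ⟨i, g, hg, v, hv, hgv⟩ := hV.cover (f x)
    obtain ⟨x', rfl⟩ := hT g x
    refine ⟨i, g, hg, x', ?_, rfl⟩
    rwa [mem_preimage, ← hS g (hgv.trans (hfT g x'))]

theorem comp_equiv {X G ι ι' : Type*} [TopologicalSpace X] {T : G → X → X} {s : Set G}
    {U : ι → Set X} (hU : IsRokhlinCover T s U) (e : ι' ≃ ι) : IsRokhlinCover T s (U ∘ e) where
  isOpen i := hU.isOpen (e i)
  pairwiseDisjoint i := hU.pairwiseDisjoint (e i)
  cover x := by
    obtain ⟨i, g, hg, hx⟩ := hU.cover x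
    exact ⟨e.symm i, g, hg, by simpa using hx⟩

theorem pi {J : Type*} [Finite J] {X G ι : J → Type*} [∀ j, TopologicalSpace (X j)]
    {T : ∀ j, G j → X j → X j} {s : ∀ j, Set (G j)}
    {U : ∀ j, ι j → Set (X j)} (hU : ∀ j, IsRokhlinCover (T j) (s j) (U j)) :
    IsRokhlinCover (fun g => Pi.map fun j => T j (g j)) (univ.pi s)
      (fun i : ∀ j, ι j => univ.pi fun j => U j (i j)) where
  isOpen i := isOpen_set_pi finite_univ fun j _ => (hU j).isOpen (i j)
  pairwiseDisjoint i g hg g' hg' hne := by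
    obtain ⟨j, hj⟩ := Function.ne_iff.mp hne
    simp only [onFun, closure_pi_set, piMap_image_univ_pi, disjoint_univ_pi]
    exact ⟨j, (hU j).pairwiseDisjoint (i j) (hg j trivial) (hg' j trivial) hj⟩
  cover x := by
    choose i g hg hx using fun j => (hU j).cover (x j)
    exact ⟨i, g, fun j _ => hg j, by rw [piMap_image_univ_pi]; exact fun j _ => hx j⟩

end IsRokhlinCover

local notation "𝕋" => AddCircle (1 : ℝ)

theorem pairwiseDisjoint_image_add_closure_ball {E G : Type*} [SeminormedAddCommGroup E]
    (a : G → E) {s : Set G} (c : E) {r : ℝ} (h : s.Pairwise fun g g' => 2 * r < ‖a g - a g'‖) :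
    s.PairwiseDisjoint fun g => (· + a g) '' closure (ball c r) := by
  intro g hg g' hg' hne
  have hmaps : ∀ g, (· + a g) '' closure (ball c r) ⊆ closedBall (c + a g) r := by
    rintro g _ ⟨x, hx, rfl⟩
    rw [mem_closedBall, dist_add_right]
    exact closure_ball_subset_closedBall hx
  refine (closedBall_disjoint_closedBall ?_).mono (hmaps g) (hmaps g')
  rw [dist_add_left, dist_eq_norm]
  linarith [h hg hg' hne]

theorem AddCircle.two_div_lt_norm_zsmul {N : ℕ} {β : ℝ} (hβ : |N * β - 1| < 1 / (3 * N))
    {d : ℤ} (hd₀ : d ≠ 0) (hdN : |d| < N) : 2 / (3 * N) < ‖d • (β : 𝕋)‖ := by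
  have hN : (0 : ℝ) < N := by exact_mod_cast (abs_nonneg d).trans_lt hdN
  rw [← AddCircle.coe_zsmul, zsmul_eq_mul, UnitAddCircle.norm_eq]
  set t := round ((d : ℝ) * β)
  have hD : (1 : ℝ) ≤ |((d - t * N : ℤ) : ℝ)| := by
    have : d - t * N ≠ 0 := fun h => hd₀ (Int.eq_zero_of_abs_lt_dvd ⟨t, by linarith⟩ hdN)
    exact_mod_cast Int.one_le_abs this
  have hsmall : |(d : ℝ) * (N * β - 1)| < 1 / 3 := by
    have hdN' : |(d : ℝ)| ≤ N := by exact_mod_cast hdN.le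
    rw [abs_mul]
    calc |(d : ℝ)| * |N * β - 1| ≤ N * |N * β - 1| := by gcongr
      _ < N * (1 / (3 * N)) := by gcongr
      _ = 1 / 3 := by field_simp
  have hsplit : (d : ℝ) * β - t = (((d - t * N : ℤ) : ℝ) + d * (N * β - 1)) / N := by
    push_cast; field_simp; ring
  rw [hsplit, abs_div, abs_of_pos hN, div_lt_div_iff₀ (by positivity) hN]
  have := abs_sub_abs_le_abs_add ((d - t * N : ℤ) : ℝ) (d * (N * β - 1))
  nlinarith

theorem exists_lt_abs_sub_nat_mul_lt {h r y : ℝ} {K : ℕ} (hh : 0 < h) (hr : h < 2 * r)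
    (hy₀ : -(h / 2) ≤ y) (hy₁ : y < (K - 1 / 2) * h) : ∃ k < K, |y - k * h| < r := by
  have hk₀ : 0 ≤ round (y / h) := by
    rw [round_eq]
    exact Int.floor_nonneg.mpr (by rw [div_add' _ _ _ hh.ne', le_div_iff₀ hh]; linarith)
  have hkK : round (y / h) < K := by
    have : y / h + 1 / 2 < K := by rw [div_add' _ _ _ hh.ne', div_lt_iff₀ hh]; linarith
    rw [round_eq]
    exact_mod_cast (Int.floor_le _).trans_lt this
  refine ⟨(round (y / h)).toNat, by omega, ?_⟩
  rw [show (((round (y / h)).toNat : ℕ) : ℝ) = round (y / h) by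
    exact_mod_cast Int.toNat_of_nonneg hk₀]
  calc |y - round (y / h) * h| = h * |y / h - round (y / h)| := by
        rw [← abs_of_pos hh, ← abs_mul, abs_of_pos hh]; congr 1; field_simp
    _ ≤ h * (1 / 2) := by gcongr; exact abs_sub_round _
    _ < r := by linarith

theorem AddCircle.isRokhlinCover_ball {N : ℕ} {β : ℝ} (hβ : 1 ≤ N * β)
    (hβ' : N * β < 1 + 1 / (3 * N)) :
    IsRokhlinCover (fun m : ℕ => (· + (m : ℤ) • (β : 𝕋))) (Iio N)
      (fun i : Fin 2 => ball ((i * (β / 2) : ℝ) : 𝕋) (1 / (3 * N))) := by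
  have hN : 1 ≤ N := Nat.pos_of_ne_zero (by rintro rfl; norm_num at hβ)
  have hr : 1 / (3 * N) ≤ (1 / 3 : ℝ) := by gcongr; norm_cast; omega
  have hβ₀ : 0 < β := by
    have : (0 : ℝ) < N := by exact_mod_cast hN
    nlinarith
  refine ⟨fun _ => isOpen_ball, fun i => ?_, fun z => ?_⟩
  · refine pairwiseDisjoint_image_add_closure_ball _ _ fun m hm m' hm' hne => ?_
    dsimp only
    rw [← sub_smul, mul_one_div]
    refine AddCircle.two_div_lt_norm_zsmul (abs_lt.mpr ⟨by linarith, by linarith⟩) ?_ ?_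
    · exact sub_ne_zero.mpr (by exact_mod_cast hne)
    · rw [mem_Iio] at hm hm'
      rw [abs_lt]; omega
  · have hz : z ∈ ((↑) : ℝ → 𝕋) '' Ico (-(β / 4)) (-(β / 4) + 1) := by
      rw [AddCircle.coe_image_Ico_eq]; trivial
    obtain ⟨y, ⟨hy₀, hy₁⟩, rfl⟩ := hz
    obtain ⟨k, hk, hyk⟩ := exists_lt_abs_sub_nat_mul_lt (y := y) (r := 1 / (3 * N))
      (K := 2 * N) (half_pos hβ₀) (by rw [mul_one_div, lt_div_iff₀ (by positivity)]; linarith)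
      (by linarith) (by push_cast; linarith)
    -- the centre `kβ/2` is the `m`-th translate of the centre of ball `i`, where `k = 2m + i`
    refine ⟨⟨k % 2, Nat.mod_lt _ two_pos⟩, k / 2, Nat.div_lt_of_lt_mul hk,
      ((y - (k / 2 : ℕ) * β : ℝ) : 𝕋), ?_, ?_⟩
    · rw [mem_ball, dist_eq_norm, ← AddCircle.coe_sub]
      refine QuotientAddGroup.norm_mk_le_norm.trans_lt (lt_of_eq_of_lt ?_ hyk)
      rw [Real.norm_eq_abs]
      congr 1
      have hk_div : (k : ℝ) = 2 * (k / 2 : ℕ) + (k % 2 : ℕ) := by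
        exact_mod_cast (Nat.div_add_mod k 2).symm
      rw [hk_div]; push_cast; ring
    · dsimp only
      rw [natCast_zsmul, ← AddCircle.coe_nsmul, ← AddCircle.coe_add, nsmul_eq_mul, sub_add_cancel]

theorem exists_zsmul_coe_eq_mem_Ioo {θ : ℝ} (hθ : Irrational θ) {a b : ℝ} (hab : a < b) :
    ∃ q : ℤ, ∃ β ∈ Ioo a b, q • (θ : 𝕋) = β := by
  have hdense : DenseRange (· • (θ : 𝕋) : ℤ → 𝕋) :=
    AddCircle.denseRange_zsmul_coe_iff.mpr (by rwa [div_one])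
  obtain ⟨q, β, hβ, hqβ⟩ := hdense.exists_mem_open
    (QuotientAddGroup.isOpenMap_coe _ isOpen_Ioo) ((nonempty_Ioo.mpr hab).image _)
  exact ⟨q, β, hβ, hqβ.symm⟩

theorem exists_isRokhlinCover_addCircle {θ : ℝ} (hθ : Irrational θ) {N : ℕ} (hN : 0 < N) :
    ∃ V : Fin 2 → Set 𝕋, IsRokhlinCover (fun m : ℕ => (· + (m : ℤ) • (θ : 𝕋))) (Iio N) V := by
  have hN' : (0 : ℝ) < N := by exact_mod_cast hN
  obtain ⟨q, β, ⟨hβ₀, hβ₁⟩, hqβ⟩ :=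
    exists_zsmul_coe_eq_mem_Ioo hθ (div_lt_div_of_pos_right (a := 1) (lt_add_of_pos_right 1
      (by positivity : (0 : ℝ) < 1 / (3 * N))) hN')
  rw [div_lt_iff₀' hN'] at hβ₀
  rw [lt_div_iff₀' hN'] at hβ₁
  refine ⟨_, (AddCircle.isRokhlinCover_ball hβ₀.le hβ₁).preimage (continuous_zsmul q)
    (fun m x => ?_) (fun m => add_right_surjective _) (fun m => add_left_injective _)⟩
  rw [smul_add, smul_comm, hqβ]

theorem stmt10_general (k : ℕ) (α : Fin k → ℝ) (hα : ∀ j, Irrational (α j))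
    (n : ℕ) (hn : 0 < n) :
    ∃ U : Fin (2 ^ k) → Set (Fin k → AddCircle (1:ℝ)),
      (∀ i, IsOpen (U i)) ∧
      (∀ i, ∀ g g' : Fin k → ℕ, (∀ j, g j < n) → (∀ j, g' j < n) → g ≠ g' →
        Disjoint
          ((fun x (j : Fin k) => x j + (g j : ℤ) • (↑(α j) : AddCircle (1:ℝ))) ''
            closure (U i))
          ((fun x (j : Fin k) => x j + (g' j : ℤ) • (↑(α j) : AddCircle (1:ℝ))) ''
            closure (U i))) ∧
      ∀ x : Fin k → AddCircle (1:ℝ), ∃ i, ∃ g : Fin k → ℕ, (∀ j, g j < n) ∧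
        x ∈ (fun y (j : Fin k) => y j + (g j : ℤ) • (↑(α j) : AddCircle (1:ℝ))) '' U i := by
  choose V hV using fun j => exists_isRokhlinCover_addCircle (hα j) hn
  obtain ⟨hopen, hdisjoint, hcover⟩ :=
    (IsRokhlinCover.pi hV).comp_equiv finFunctionFinEquiv.symm
  refine ⟨_, hopen, fun i g g' hg hg' => hdisjoint i (fun j _ => hg j) (fun j _ => hg' j),
    fun x => ?_⟩
  obtain ⟨i, g, hg, hx⟩ := hcover x
  exact ⟨i, g, fun j => hg j trivial, hx⟩

/-- an irrational rotation `ℤ^k`-action on the `k`-torus `𝕋^k` has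
topological Rokhlin dimension at most `2^k - 1`: for every `n` there exist `2^k` open
sets each inducing an `[n]`-tower (pairwise disjoint translates of the closure by
`g ∈ {0,…,n-1}^k`), whose towers cover `𝕋^k`. -/
theorem stmt10 (k : ℕ) (hk : 0 < k) (α : Fin k → ℝ) (hα : ∀ j, Irrational (α j))
    (n : ℕ) (hn : 0 < n) :
    ∃ U : Fin (2 ^ k) → Set (Fin k → AddCircle (1:ℝ)),
      (∀ i, IsOpen (U i)) ∧
      (∀ i, ∀ g g' : Fin k → ℕ, (∀ j, g j < n) → (∀ j, g' j < n) → g ≠ g' →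
        Disjoint
          ((fun x (j : Fin k) => x j + (g j : ℤ) • (↑(α j) : AddCircle (1:ℝ))) ''
            closure (U i))
          ((fun x (j : Fin k) => x j + (g' j : ℤ) • (↑(α j) : AddCircle (1:ℝ))) ''
            closure (U i))) ∧
      ∀ x : Fin k → AddCircle (1:ℝ), ∃ i, ∃ g : Fin k → ℕ, (∀ j, g j < n) ∧
        x ∈ (fun y (j : Fin k) => y j + (g j : ℤ) • (↑(α j) : AddCircle (1:ℝ))) '' U i :=
  stmt10_general k α hα n hn
end

section
/- For every irrational number α and every n ∈ ℕ, there exist two open sets U₀, U₁ ⊆ 𝕋 = ℝ/ℤ such that for each m ∈ {0,1} the sets U̅_m, T_α U̅_m, ..., T_α^{n−1} U̅_m are pairwise disjoint (where T_α is rotation by α), and ∪_{m=0}^{1} ∪_{j=0}^{n−1} T_α^j U_m = 𝕋. (I.e., the irrational rotation on the circle has topological Rokhlin dimension at most 1.) -/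
/-!
By density of the orbit of an irrational rotation, `q • α ≡ β (mod 1)` for some `q : ℤ` and some
`β` slightly larger than `1 / n`. For the rotation by `β` two towers suffice: their bases are arcs
of length `3β/4` starting at `0` and at `β/2`, so the `2n` levels are consecutive overlapping arcs
with spacing `β/2`. Since `x ↦ q • x` is a continuous endomorphism of `𝕋` with
`q • (x + j • α) = q • x + j • β`, pulling these bases back along it gives towers for `α`.
-/

open Set

local notation "𝕋" => AddCircle (1 : ℝ)

/-- With `ι` of cardinality `d + 1`, this is the condition defining topological Rokhlin
dimension `≤ d` of the translation by `g`, at height `n`. -/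
def IsRokhlinCover_s11 {G ι : Type*} [AddGroup G] [TopologicalSpace G] (g : G) (n : ℕ)
    (U : ι → Set G) : Prop :=
  (∀ m, IsOpen (U m)) ∧
    (∀ m, ∀ i j : ℕ, i < n → j < n → i ≠ j →
      Disjoint ((fun x => x + (i : ℤ) • g) '' closure (U m))
        ((fun x => x + (j : ℤ) • g) '' closure (U m))) ∧
    ∀ x, ∃ m, ∃ j : ℕ, j < n ∧ x ∈ (fun y => y + (j : ℤ) • g) '' U m

theorem AddMonoidHom.image_add_right_preimage {G H : Type*} [AddGroup G] [AddGroup H]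
    (f : G →+ H) (g : G) (W : Set H) :
    (fun x => x + g) '' (f ⁻¹' W) = f ⁻¹' ((fun y => y + f g) '' W) := by
  simp only [image_add_right, preimage_preimage, map_add, map_neg]

theorem IsRokhlinCover_s11.preimage {G H ι : Type*} [AddGroup G] [TopologicalSpace G] [AddGroup H]
    [TopologicalSpace H] {f : G →+ H} (hf : Continuous f) {g : G} {n : ℕ} {W : ι → Set H}
    (hW : IsRokhlinCover_s11 (f g) n W) : IsRokhlinCover_s11 g n (fun m => f ⁻¹' W m) := by
  obtain ⟨hopen, hdisj, hcover⟩ := hW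
  refine ⟨fun m => (hopen m).preimage hf, fun m i j hi hj hij => ?_, fun x => ?_⟩
  · have hsub (k : ℤ) : (fun x => x + k • g) '' closure (f ⁻¹' W m) ⊆
        f ⁻¹' ((fun y => y + k • f g) '' closure (W m)) := by
      rw [← map_zsmul, ← f.image_add_right_preimage]
      exact image_mono (hf.closure_preimage_subset _)
    exact ((hdisj m i j hi hj hij).preimage f).mono (hsub i) (hsub j)
  · obtain ⟨m, j, hj, hx⟩ := hcover (f x)
    exact ⟨m, j, hj, by rwa [f.image_add_right_preimage, map_zsmul]⟩

theorem exists_zsmul_coe_eq_coe_mem_Ioo {α : ℝ} (hα : Irrational α) {a b : ℝ} (hab : a < b) :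
    ∃ q : ℤ, ∃ β ∈ Ioo a b, q • (α : 𝕋) = β := by
  have hdense : DenseRange (· • (α : 𝕋) : ℤ → 𝕋) :=
    AddCircle.denseRange_zsmul_coe_iff.mpr (by simpa using hα)
  obtain ⟨q, β, hβ, hqβ⟩ := hdense.exists_mem_open
    (QuotientAddGroup.isOpenMap_coe _ isOpen_Ioo) ((nonempty_Ioo.mpr hab).image _)
  exact ⟨q, β, hβ, hqβ.symm⟩

theorem Icc_add_mul_disjoint {a c β : ℝ} (hc : c < β) {i j : ℕ} (hij : i ≠ j) :
    Disjoint (Icc (a + i * β) (a + i * β + c)) (Icc (a + j * β) (a + j * β + c)) := by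
  wlog hlt : i < j generalizing i j
  · exact (this hij.symm (hij.symm.lt_of_le (not_lt.mp hlt))).symm
  refine disjoint_left.mpr fun x hxi hxj => ?_
  have hij' : (i : ℝ) + 1 ≤ j := by exact_mod_cast hlt
  have hβ : 0 < β := by linarith [hxi.1, hxi.2]
  nlinarith [hxi.2, hxj.1]

theorem exists_mem_Ioo_towers {β t : ℝ} {n : ℕ} (hβ : 0 < β) (ht₀ : β / 4 ≤ t)
    (ht₁ : t < β / 4 + n * β) :
    ∃ m : Fin 2, ∃ j < n,
      t ∈ Ioo ((m : ℕ) * β / 2 + j * β) ((m : ℕ) * β / 2 + j * β + 3 * β / 4) := by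
  set u := t / β - 1 / 4 with hu
  have htu : t = u * β + β / 4 := by rw [hu]; field_simp; ring
  have hu₀ : 0 ≤ u := by rw [hu, sub_nonneg, le_div_iff₀ hβ]; linarith
  set j := ⌊u⌋₊
  have hj_le : (j : ℝ) * β ≤ u * β := mul_le_mul_of_nonneg_right (Nat.floor_le hu₀) hβ.le
  have hj_lt : u * β < (j + 1) * β := mul_lt_mul_of_pos_right (Nat.lt_floor_add_one u) hβ
  have hjn : j < n := (Nat.floor_lt hu₀).mpr <| lt_of_mul_lt_mul_right (by linarith) hβ.le
  by_cases h : t < j * β + 3 * β / 4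
  · exact ⟨0, j, hjn, by simp only [Fin.val_zero]; constructor <;> push_cast <;> linarith⟩
  · exact ⟨1, j, hjn, by simp only [Fin.val_one]; constructor <;> push_cast <;> linarith⟩

theorem image_add_zsmul_coe_image (β : ℝ) (k : ℕ) (s : Set ℝ) :
    (fun x : 𝕋 => x + (k : ℤ) • (β : 𝕋)) '' ((↑) '' s) = (↑) '' ((fun x => x + k * β) '' s) :=
  image_comm fun x => by simp

def towerBase (β : ℝ) (m : Fin 2) : Set 𝕋 :=
  (↑) '' Ioo ((m : ℕ) * β / 2) ((m : ℕ) * β / 2 + 3 * β / 4)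

/-- `n * β < 1 + β / 4` keeps the `n` closed levels of a tower, spanning `(n - 1)β + 3β/4`, inside
one period; `1 ≤ n * β` makes the open levels of both towers, which cover `(0, nβ + β/4)`, cover
a full period `[β/4, β/4 + 1)`. -/
theorem isRokhlinCover_towerBase {β : ℝ} {n : ℕ} (h₁ : 1 ≤ n * β) (h₂ : n * β < 1 + β / 4) :
    IsRokhlinCover_s11 (β : 𝕋) n (towerBase β) := by
  have hβ : 0 < β := pos_of_mul_pos_right (one_pos.trans_le h₁) n.cast_nonneg
  refine ⟨fun m => QuotientAddGroup.isOpenMap_coe _ isOpen_Ioo, fun m i j hi hj hij => ?_,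
    fun x => ?_⟩
  · set a : ℝ := (m : ℕ) * β / 2
    have hcl : closure (towerBase β m) ⊆ (↑) '' Icc a (a + 3 * β / 4) :=
      closure_minimal (image_mono Ioo_subset_Icc_self)
        (isCompact_Icc.image QuotientAddGroup.continuous_mk).isClosed
    have hsub (k : ℕ) : (fun x : 𝕋 => x + (k : ℤ) • (β : 𝕋)) '' closure (towerBase β m) ⊆
        (↑) '' Icc (a + k * β) (a + k * β + 3 * β / 4) := by
      refine (image_mono hcl).trans ?_
      rw [image_add_zsmul_coe_image, image_add_const_Icc, add_right_comm]
    have hIco {k : ℕ} (hk : k < n) : Icc (a + k * β) (a + k * β + 3 * β / 4) ⊆ Ico a (a + 1) := by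
      have : (k : ℝ) + 1 ≤ n := by exact_mod_cast hk
      refine Icc_subset_Ico_iff (by linarith) |>.mpr ⟨le_add_of_nonneg_right (by positivity), by nlinarith⟩
    have hinj : InjOn ((↑) : ℝ → 𝕋) (Ico a (a + 1)) :=
      fun x hx y hy => (AddCircle.coe_eq_coe_iff_of_mem_Ico hx hy).mp
    exact ((Icc_add_mul_disjoint (by linarith) hij).image hinj (hIco hi) (hIco hj)).mono
      (hsub i) (hsub j)
  · obtain ⟨t, ht, rfl⟩ : x ∈ (↑) '' Ico (β / 4) (β / 4 + 1) := by
      rw [AddCircle.coe_image_Ico_eq]; trivial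
    obtain ⟨m, j, hj, htj⟩ := exists_mem_Ioo_towers (n := n) hβ ht.1 (by linarith [ht.2])
    refine ⟨m, j, hj, ?_⟩
    rw [towerBase, image_add_zsmul_coe_image, image_add_const_Ioo, add_right_comm]
    exact mem_image_of_mem _ htj

/-- the irrational rotation `T_α` on `𝕋 = ℝ/ℤ` has topological Rokhlin
dimension at most 1: for every `n` there are two open sets `U₀, U₁` such that for each
`m` the sets `U̅_m, T_α U̅_m, …, T_α^{n-1} U̅_m` are pairwise disjoint, and the translates
`T_α^j U_m` (`m ∈ {0,1}`, `0 ≤ j < n`) cover `𝕋`. -/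
theorem stmt11 (α : ℝ) (hα : Irrational α) (n : ℕ) (hn : 0 < n) :
    ∃ U : Fin 2 → Set (AddCircle (1:ℝ)),
      (∀ m, IsOpen (U m)) ∧
      (∀ m, ∀ i j : ℕ, i < n → j < n → i ≠ j →
        Disjoint ((fun x => x + (i : ℤ) • (↑α : AddCircle (1:ℝ))) '' closure (U m))
                 ((fun x => x + (j : ℤ) • (↑α : AddCircle (1:ℝ))) '' closure (U m))) ∧
      ∀ x : AddCircle (1:ℝ), ∃ m, ∃ j : ℕ, j < n ∧
        x ∈ (fun y => y + (j : ℤ) • (↑α : AddCircle (1:ℝ))) '' U m := by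
  have hn' : (1 : ℝ) ≤ n := by exact_mod_cast hn
  obtain ⟨q, β, ⟨hβ₁, hβ₂⟩, hqβ⟩ :=
    exists_zsmul_coe_eq_coe_mem_Ioo hα (a := 1 / n) (b := 4 / (4 * n - 1))
      (by rw [div_lt_div_iff₀ (by linarith) (by linarith)]; linarith)
  have hβ : IsRokhlinCover_s11 (β : 𝕋) n (towerBase β) := by
    refine isRokhlinCover_towerBase ?_ ?_
    · rw [div_lt_iff₀ (by linarith)] at hβ₁; linarith
    · rw [lt_div_iff₀ (by linarith)] at hβ₂; linarith
  rw [← hqβ] at hβ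
  exact ⟨_, hβ.preimage (f := zsmulAddGroupHom q) (continuous_zsmul q)⟩
end

section
/- Let (X, ℤ^k, T) be an extension of (Y, ℤ^k, S) via a factor map π : X → Y, with dim_Rok(Y, ℤ^k) = D and mdim(X) < L/2. Then the set of continuous functions f ∈ C(X, [0,1]^{(D+1)L}) for which I_f × π is an embedding of (X, ℤ^k, T) into (([0,1]^{(D+1)L})^{ℤ^k} × Y, σ × S) is a dense G_δ subset of C(X, [0,1]^{(D+1)L}) with respect to the supremum norm. -/
open scoped Classical ENNReal

/-- The order of a finite cover `α` (as `-1 +` the maximal multiplicity), valued in `ℕ∞`. -/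
noncomputable def coverOrd {X : Type*} (α : Finset (Set X)) : ℕ∞ :=
  (⨆ x : X, ((α.filter fun U => x ∈ U).card : ℕ∞)) - 1

/-- `α` is a finite open cover of `X`. -/
def IsFinOpenCover {X : Type*} [TopologicalSpace X] (α : Finset (Set X)) : Prop :=
  (∀ U ∈ α, IsOpen U) ∧ ∀ x : X, ∃ U ∈ α, x ∈ U

/-- `widim_ε(X, ρ)`: minimal order of a finite open cover of mesh `≤ ε` w.r.t. `ρ`. -/
noncomputable def widimWith (X : Type*) [TopologicalSpace X] (ρ : X → X → ℝ) (ε : ℝ) : ℕ∞ :=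
  ⨅ (α : Finset (Set X)) (_ : IsFinOpenCover α ∧ ∀ U ∈ α, ∀ x ∈ U, ∀ y ∈ U, ρ x y ≤ ε),
    coverOrd α

/-- The mean dimension of a `ℤ^k`-action `act` on a compact metric space:
`sup_{ε>0} lim_n widim_ε(X, d_{[n]})/n^k`, where `[n] = {0,…,n-1}^k` and
`d_{[n]}(x,y) = max_{g∈[n]} d(gx,gy)` (the limit is expressed as a `limsup`). -/
noncomputable def mdimZk (k : ℕ) (X : Type*) [MetricSpace X]
    (act : (Fin k → ℤ) → X → X) : ℝ≥0∞ :=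
  ⨆ (ε : ℝ) (_ : 0 < ε),
    Filter.limsup (fun n : ℕ =>
      ((widimWith X (fun x y =>
          ⨆ g : {g : Fin k → ℤ // ∀ j, 0 ≤ g j ∧ g j < (n : ℤ)},
            dist (act g.1 x) (act g.1 y)) ε : ℕ∞) : ℝ≥0∞) / (n : ℝ≥0∞) ^ k)
      Filter.atTop

/-- Topological Rokhlin dimension at most `D` for a `ℤ^k`-action: for every `n ≥ 1`
there are `D+1` open sets whose `[n]`-translates of closures are pairwise disjoint and
whose `[n]`-towers cover the space. -/
def RokhlinDimLE (k : ℕ) {Y : Type*} [TopologicalSpace Y]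
    (act : (Fin k → ℤ) → Y → Y) (D : ℕ) : Prop :=
  ∀ n : ℕ, 0 < n → ∃ U : Fin (D + 1) → Set Y,
    (∀ i, IsOpen (U i)) ∧
    (∀ i, ∀ g g' : Fin k → ℤ, (∀ j, 0 ≤ g j ∧ g j < (n : ℤ)) →
      (∀ j, 0 ≤ g' j ∧ g' j < (n : ℤ)) → g ≠ g' →
      Disjoint (act g '' closure (U i)) (act g' '' closure (U i))) ∧
    ∀ y : Y, ∃ i, ∃ g : Fin k → ℤ, (∀ j, 0 ≤ g j ∧ g j < (n : ℤ)) ∧ y ∈ act g '' U i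


set_option linter.unusedSectionVars false
set_option linter.unreachableTactic false
set_option linter.unusedTactic false
set_option maxHeartbeats 1000000
set_option synthInstance.maxHeartbeats 1000000
open Metric Set Module Filter

open scoped Classical
open Metric Set Module

section GP
variable {ι : Type*} [Fintype ι]

/-- homogenization map -/
noncomputable def homv (p : ι → ℝ) : Option ι → ℝ := fun o => Option.elim o 1 p

lemma continuous_homv : Continuous fun p : ι → ℝ => homv p := by
  apply continuous_pi
  intro o
  cases o with
  | none => exact continuous_const
  | some i => exact continuous_apply i

lemma span_ne_top (t : Finset (Option ι → ℝ)) (ht : t.card ≤ Fintype.card ι) :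
    Submodule.span ℝ (t : Set (Option ι → ℝ)) ≠ ⊤ := by
  intro h
  have h1 : finrank ℝ ↥(Submodule.span ℝ (t : Set (Option ι → ℝ))) ≤ t.card := by
    simpa using finrank_span_le_card (R := ℝ) (t : Set (Option ι → ℝ))
  rw [h, finrank_top] at h1
  rw [Module.finrank_fintype_fun_eq_card, Fintype.card_option] at h1
  omega

lemma interior_bad_empty (t : Finset (Option ι → ℝ)) (ht : t.card ≤ Fintype.card ι) :
    interior (homv ⁻¹' ((Submodule.span ℝ (t : Set (Option ι → ℝ))) : Set (Option ι → ℝ))) = ∅ := by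
  by_contra hne
  obtain ⟨p₀, hp₀⟩ := Set.nonempty_iff_ne_empty.2 hne
  obtain ⟨r, hr, hball⟩ := Metric.mem_nhds_iff.1 (mem_interior_iff_mem_nhds.1 hp₀)
  set S := Submodule.span ℝ (t : Set (Option ι → ℝ)) with hS
  apply span_ne_top t ht
  have hmem : ∀ q ∈ ball p₀ r, homv q ∈ S := fun q hq => hball hq
  have hp₀S : homv p₀ ∈ S := hmem p₀ (mem_ball_self hr)
  set E : Option ι → (Option ι → ℝ) := fun o o' => if o = o' then 1 else 0 with hE
  have hEi : ∀ i : ι, E (some i) ∈ S := by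
    intro i
    set p₁ : ι → ℝ := fun j => p₀ j + (r/2) * (if i = j then 1 else 0) with hp₁
    have hp₁b : p₁ ∈ ball p₀ r := by
      rw [mem_ball, dist_comm]
      have : dist p₀ p₁ ≤ r/2 := by
        rw [dist_pi_le_iff (by linarith)]
        intro b
        simp only [hp₁, Real.dist_eq]
        rw [abs_sub_comm]
        ring_nf
        split <;> simp [abs_of_nonneg, hr.le] <;> nlinarith [hr]
      linarith
    have hp₁S : homv p₁ ∈ S := hmem p₁ hp₁b
    have key : E (some i) = (2/r) • (homv p₁ - homv p₀) := by
      funext o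
      cases o with
      | none => simp [hE, homv]
      | some j =>
        simp only [hE, homv, Pi.smul_apply, Pi.sub_apply, Option.elim, hp₁, smul_eq_mul]
        rw [show p₀ j + r / 2 * (if i = j then 1 else 0) - p₀ j
            = r/2 * (if i = j then 1 else 0) by ring]
        rw [show (2/r) * (r/2 * (if i = j then 1 else 0)) = (if i = j then 1 else 0) by
          by_cases h : i = j <;> field_simp [h]]
        simp [Option.some_inj, eq_comm]
    rw [key]
    exact S.smul_mem _ (S.sub_mem hp₁S hp₀S)
  have hEnone : E none ∈ S := by
    have key : E none = homv p₀ - ∑ i : ι, p₀ i • E (some i) := by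
      funext o
      cases o with
      | none => simp [hE, homv]
      | some j =>
        simp only [hE, homv, Pi.sub_apply, Finset.sum_apply, Pi.smul_apply, smul_eq_mul,
          Option.elim]
        rw [Finset.sum_eq_single_of_mem j (Finset.mem_univ j)]
        · simp
        · intro b _ hb
          simp [Option.some_inj, hb]
    rw [key]
    exact S.sub_mem hp₀S (S.sum_mem fun i _ => S.smul_mem _ (hEi i))
  rw [Submodule.eq_top_iff']
  intro x
  have : x = ∑ o : Option ι, x o • E o := pi_eq_sum_univ x
  rw [this]
  refine S.sum_mem fun o _ => ?_
  cases o with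
  | none => exact S.smul_mem _ hEnone
  | some i => exact S.smul_mem _ (hEi i)

end GP

section GP2
variable {ι : Type*} [Fintype ι]

lemma exists_avoid (T : Finset (Finset (Option ι → ℝ)))
    (hT : ∀ t ∈ T, t.card ≤ Fintype.card ι)
    (w : ι → ℝ) (hw : ∀ i, w i ∈ Icc (0:ℝ) 1) (δ : ℝ) (hδ : 0 < δ) :
    ∃ p : ι → ℝ, (∀ i, p i ∈ Icc (0:ℝ) 1) ∧ (∀ i, |p i - w i| ≤ δ) ∧
      ∀ t ∈ T, homv p ∉ Submodule.span ℝ (t : Set (Option ι → ℝ)) := by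
  set O : Set (ι → ℝ) := ⋂ i : ι, (fun p : ι → ℝ => p i) ⁻¹'
      Ioo (max 0 (w i - δ)) (min 1 (w i + δ)) with hO
  have hOopen : IsOpen O := isOpen_iInter_of_finite fun i =>
    (isOpen_Ioo).preimage (continuous_apply i)
  have hlt : ∀ i, max 0 (w i - δ) < min 1 (w i + δ) := by
    intro i
    obtain ⟨h0, h1⟩ := hw i
    rcases lt_or_ge (w i) 1 with h | h
    · apply max_lt <;> apply lt_min <;> linarith
    · have : w i = 1 := le_antisymm h1 h
      apply max_lt <;> apply lt_min <;> linarith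
  have hOne : O.Nonempty := by
    refine ⟨fun i => (max 0 (w i - δ) + min 1 (w i + δ)) / 2, ?_⟩
    simp only [hO, Set.mem_iInter, Set.mem_preimage, Set.mem_Ioo]
    intro i
    constructor <;> [skip; skip] <;> have := hlt i <;> linarith
  have hD : Dense (⋂ t : ↥T, (homv ⁻¹'
      ((Submodule.span ℝ ((t : Finset (Option ι → ℝ)) : Set (Option ι → ℝ))) : Set (Option ι → ℝ)))ᶜ) := by
    apply dense_iInter_of_isOpen
    · intro t
      have : IsClosed ((Submodule.span ℝ ((t : Finset (Option ι → ℝ)) : Set (Option ι → ℝ))) : Set (Option ι → ℝ)) :=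
        Submodule.closed_of_finiteDimensional _
      exact (this.preimage continuous_homv).isOpen_compl
    · intro t
      rw [← interior_eq_empty_iff_dense_compl]
      exact interior_bad_empty _ (hT _ t.2)
  obtain ⟨p, hpO, hpD⟩ := hD.inter_open_nonempty O hOopen hOne
  simp only [hO, Set.mem_iInter, Set.mem_preimage, Set.mem_Ioo] at hpO
  refine ⟨p, ?_, ?_, ?_⟩
  · intro i
    obtain ⟨h1, h2⟩ := hpO i
    constructor
    · exact le_of_lt (lt_of_le_of_lt (le_max_left _ _) h1)
    · exact le_of_lt (lt_of_lt_of_le h2 (min_le_left _ _))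
  · intro i
    obtain ⟨h1, h2⟩ := hpO i
    have := le_max_right 0 (w i - δ)
    have := min_le_right 1 (w i + δ)
    rw [abs_sub_le_iff]
    constructor <;> linarith
  · intro t ht hmem
    have := Set.mem_iInter.1 hpD ⟨t, ht⟩
    exact this hmem

end GP2

section GP3
variable {ι : Type*} [Fintype ι]

lemma exists_gp (M : ℕ) (w : ℕ → ι → ℝ) (hw : ∀ j i, w j i ∈ Icc (0:ℝ) 1)
    (δ : ℝ) (hδ : 0 < δ) :
    ∃ v : ℕ → ι → ℝ,
      (∀ j, (∀ i, v j i ∈ Icc (0:ℝ) 1) ∧ ∀ i, |v j i - w j i| ≤ δ) ∧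
      ∀ j < M, ∀ t : Finset ℕ, (∀ a ∈ t, a < j) → t.card ≤ Fintype.card ι →
        homv (v j) ∉ Submodule.span ℝ
          (((t.image fun a => homv (v a)) : Finset (Option ι → ℝ)) : Set (Option ι → ℝ)) := by
  induction M with
  | zero =>
    exact ⟨w, fun j => ⟨hw j, fun i => by simp [hδ.le]⟩, fun j hj => by omega⟩
  | succ M ih =>
    obtain ⟨v, hvic, hvav⟩ := ih
    set T : Finset (Finset (Option ι → ℝ)) :=
      ((Finset.range M).powerset.filter fun t => t.card ≤ Fintype.card ι).image
        (fun t => t.image fun a => homv (v a)) with hT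
    have hTcard : ∀ t ∈ T, t.card ≤ Fintype.card ι := by
      intro t ht
      rw [hT, Finset.mem_image] at ht
      obtain ⟨t', ht', rfl⟩ := ht
      rw [Finset.mem_filter] at ht'
      exact le_trans (Finset.card_image_le) ht'.2
    obtain ⟨p, hpIcc, hpclose, hpavoid⟩ := exists_avoid T hTcard (w M) (hw M) δ hδ
    refine ⟨Function.update v M p, ?_, ?_⟩
    · intro j
      rcases eq_or_ne j M with rfl | hj
      · simp only [Function.update_self]
        exact ⟨hpIcc, hpclose⟩
      · simp only [Function.update_of_ne hj]
        exact hvic j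
    · intro j hj t ht htc
      have himg : ∀ (t : Finset ℕ), (∀ a ∈ t, a < M) →
          (t.image fun a => homv (Function.update v M p a)) = t.image fun a => homv (v a) := by
        intro t htlt
        apply Finset.image_congr
        intro a ha
        simp only
        rw [Function.update_of_ne (by have := htlt a ha; omega)]
      rcases eq_or_ne j M with rfl | hjM
      · rw [Function.update_self, himg t ht]
        apply hpavoid
        rw [hT, Finset.mem_image]
        refine ⟨t, ?_, rfl⟩
        rw [Finset.mem_filter, Finset.mem_powerset]
        exact ⟨fun a ha => Finset.mem_range.2 (ht a ha), htc⟩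
      · have hjM' : j < M := by omega
        rw [Function.update_of_ne hjM, himg t (fun a ha => lt_trans (ht a ha) hjM')]
        exact hvav j hjM' t ht htc

lemma gp_unique (v : ℕ → ι → ℝ) (M : ℕ)
    (hAV : ∀ j < M, ∀ t : Finset ℕ, (∀ a ∈ t, a < j) → t.card ≤ Fintype.card ι →
      homv (v j) ∉ Submodule.span ℝ
        (((t.image fun a => homv (v a)) : Finset (Option ι → ℝ)) : Set (Option ι → ℝ)))
    (s : Finset ℕ) (hs : ∀ a ∈ s, a < M) (hcard : s.card ≤ Fintype.card ι + 1)
    (c : ℕ → ℝ) (hsum : ∑ a ∈ s, c a = 0) (hcomb : ∑ a ∈ s, c a • v a = 0) :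
    ∀ a ∈ s, c a = 0 := by
  by_contra hcon
  push_neg at hcon
  obtain ⟨a₀, ha₀s, ha₀⟩ := hcon
  set supp := s.filter (fun a => c a ≠ 0) with hsupp
  have hsne : supp.Nonempty := ⟨a₀, Finset.mem_filter.2 ⟨ha₀s, ha₀⟩⟩
  set j := supp.max' hsne with hj
  have hjsupp : j ∈ supp := supp.max'_mem hsne
  have hjs : j ∈ s := (Finset.mem_filter.1 hjsupp).1
  have hcj : c j ≠ 0 := (Finset.mem_filter.1 hjsupp).2
  set t := supp.erase j with ht
  have htlt : ∀ a ∈ t, a < j := by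
    intro a ha
    have h1 : a ≠ j := Finset.ne_of_mem_erase ha
    have h2 : a ∈ supp := Finset.mem_of_mem_erase ha
    exact lt_of_le_of_ne (supp.le_max' a h2) h1
  have htc : t.card ≤ Fintype.card ι := by
    have h1 : t.card = supp.card - 1 := Finset.card_erase_of_mem hjsupp
    have h2 : supp.card ≤ s.card := Finset.card_filter_le _ _
    have h3 : 0 < supp.card := Finset.card_pos.2 hsne
    omega
  -- sum of homv
  have hhom : ∑ a ∈ s, c a • homv (v a) = 0 := by
    funext o
    cases o with
    | none =>
      simpa [homv] using hsum
    | some i =>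
      have := congrFun hcomb i
      simpa [homv, Finset.sum_apply] using this
  have hhom2 : ∑ a ∈ supp, c a • homv (v a) = 0 := by
    rw [← hhom]
    apply Finset.sum_subset (Finset.filter_subset _ _)
    intro a has hans
    have : c a = 0 := by
      by_contra h
      exact hans (Finset.mem_filter.2 ⟨has, h⟩)
    simp [this]
  have hhom3 : c j • homv (v j) + ∑ a ∈ t, c a • homv (v a) = 0 := by
    rw [← hhom2, ht]
    exact Finset.add_sum_erase supp (fun a => c a • homv (v a)) hjsupp
  have hexp : homv (v j) = (-(c j)⁻¹) • ∑ a ∈ t, c a • homv (v a) := by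
    have h1 : c j • homv (v j) = -∑ a ∈ t, c a • homv (v a) := by
      rw [eq_neg_iff_add_eq_zero]; exact hhom3
    calc homv (v j) = (c j)⁻¹ • (c j • homv (v j)) := by
          rw [smul_smul, inv_mul_cancel₀ hcj, one_smul]
      _ = (c j)⁻¹ • (-∑ a ∈ t, c a • homv (v a)) := by rw [h1]
      _ = (-(c j)⁻¹) • ∑ a ∈ t, c a • homv (v a) := by rw [smul_neg, neg_smul]
  apply hAV j (hs j hjs) t htlt htc
  rw [hexp]
  apply Submodule.smul_mem
  apply Submodule.sum_mem
  intro a ha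
  apply Submodule.smul_mem
  apply Submodule.subset_span
  rw [Finset.coe_image]
  exact Set.mem_image_of_mem _ (Finset.mem_coe.2 ha)

end GP3

open scoped Classical
open Metric Set Module


section POU
variable {X : Type*} [MetricSpace X]

lemma exists_partition (α : Finset (Set X)) (hα : IsFinOpenCover α) :
    ∃ φ : Set X → X → ℝ, (∀ U, Continuous (φ U)) ∧ (∀ U x, 0 ≤ φ U x) ∧
      (∀ x, ∑ U ∈ α, φ U x = 1) ∧ (∀ U x, 0 < φ U x → x ∈ U) := by
  set g : Set X → X → ℝ := fun U x => if U = Set.univ then 1 else infDist x Uᶜ with hg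
  have hgc : ∀ U, Continuous (g U) := by
    intro U
    rcases eq_or_ne U Set.univ with rfl | hU
    · simpa [hg] using continuous_const
    · simpa [hg, hU] using continuous_infDist_pt Uᶜ
  have hgnn : ∀ U x, 0 ≤ g U x := by
    intro U x
    rcases eq_or_ne U Set.univ with rfl | hU
    · simp [hg]
    · simp [hg, hU, infDist_nonneg]
  have hgpos : ∀ U x, 0 < g U x → x ∈ U := by
    intro U x h
    rcases eq_or_ne U Set.univ with rfl | hU
    · trivial
    · rw [show g U x = infDist x Uᶜ by simp [hg, hU]] at h
      by_contra hx
      have : infDist x Uᶜ ≤ dist x x := infDist_le_dist_of_mem hx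
      simp only [dist_self] at this
      linarith
  have hgwit : ∀ U, IsOpen U → ∀ x ∈ U, 0 < g U x := by
    intro U hUo x hx
    rcases eq_or_ne U Set.univ with rfl | hU
    · simp [hg]
    · have hne : Uᶜ.Nonempty := Set.nonempty_compl.2 hU
      rcases lt_or_ge 0 (infDist x Uᶜ) with h | h
      · simpa [hg, hU] using h
      · exfalso
        have h0 : infDist x Uᶜ = 0 := le_antisymm h infDist_nonneg
        have : x ∈ closure Uᶜ := (mem_closure_iff_infDist_zero hne).2 h0
        rw [IsClosed.closure_eq hUo.isClosed_compl] at this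
        exact this hx
  set T : X → ℝ := fun x => ∑ U ∈ α, g U x with hT
  have hTc : Continuous T := continuous_finset_sum _ fun U _ => hgc U
  have hTpos : ∀ x, 0 < T x := by
    intro x
    obtain ⟨U, hUα, hxU⟩ := hα.2 x
    exact Finset.sum_pos' (fun V _ => hgnn V x) ⟨U, hUα, hgwit U (hα.1 U hUα) x hxU⟩
  refine ⟨fun U x => g U x / T x, ?_, ?_, ?_, ?_⟩
  · intro U
    exact (hgc U).div hTc fun x => (hTpos x).ne'
  · intro U x
    exact div_nonneg (hgnn U x) (hTpos x).le
  · intro x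
    rw [← Finset.sum_div]
    exact div_self (hTpos x).ne'
  · intro U x h
    apply hgpos U x
    by_contra hle
    push_neg at hle
    have : g U x / T x ≤ 0 := div_nonpos_of_nonpos_of_nonneg hle (hTpos x).le
    linarith

end POU

section OpenPart
variable {k : ℕ} {X Y : Type*} [MetricSpace X] [CompactSpace X] [MetricSpace Y]

lemma open_good (actX : (Fin k → ℤ) → X → X) (hXc : ∀ g, Continuous (actX g))
    (π : X → Y) (hπc : Continuous π) (m : ℕ) (η : ℝ) :
    IsOpen {f : C(X, Fin m → Set.Icc (0:ℝ) 1) |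
      ∀ x y : X, η ≤ dist x y →
        ((fun g : Fin k → ℤ => f (actX g x)), π x) ≠ ((fun g : Fin k → ℤ => f (actX g y)), π y)} := by
  rw [Metric.isOpen_iff]
  intro f hf
  set K : Set (X × X) := {p | η ≤ dist p.1 p.2} with hK
  have hKc : IsCompact K := (isClosed_le continuous_const continuous_dist).isCompact
  rcases Set.eq_empty_or_nonempty K with hKe | hKne
  · refine ⟨1, one_pos, fun f' _ x y hxy => ?_⟩
    exact absurd (show (x, y) ∈ K from hxy) (by simp [hKe])
  · have claim : ∀ p : K, ∃ (O : Set (X × X)) (r : ℝ), IsOpen O ∧ (p : X × X) ∈ O ∧ 0 < r ∧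
        ∀ f' : C(X, Fin m → Set.Icc (0:ℝ) 1), dist f' f < r → ∀ q ∈ O,
          ((fun g : Fin k → ℤ => f' (actX g q.1)), π q.1) ≠
          ((fun g : Fin k → ℤ => f' (actX g q.2)), π q.2) := by
      rintro ⟨⟨x, y⟩, hp⟩
      have hne := hf x y hp
      by_cases hππ : π x = π y
      · have hfun : (fun g : Fin k → ℤ => f (actX g x)) ≠ fun g => f (actX g y) := by
          intro hcon
          exact hne (by rw [hcon, hππ])
        obtain ⟨h, hh⟩ := Function.ne_iff.1 hfun
        obtain ⟨j, hj⟩ := Function.ne_iff.1 hh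
        set c := dist (f (actX h x) j) (f (actX h y) j) with hc
        have hcpos : 0 < c := dist_pos.2 hj
        set O : Set (X × X) :=
          {q | c/2 < dist (f (actX h q.1) j) (f (actX h q.2) j)} with hO
        have hcont : Continuous fun q : X × X =>
            dist (f (actX h q.1) j) (f (actX h q.2) j) := by
          apply Continuous.dist
          · exact (continuous_apply j).comp
              (f.continuous.comp ((hXc h).comp continuous_fst))
          · exact (continuous_apply j).comp
              (f.continuous.comp ((hXc h).comp continuous_snd))
        refine ⟨O, c/8, isOpen_lt continuous_const hcont, by simp [hO]; linarith, by linarith, ?_⟩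
        intro f' hf' q hq
        have key : ∀ z : X, dist (f z j) (f' z j) ≤ dist f' f := by
          intro z
          calc dist (f z j) (f' z j) ≤ dist (f z) (f' z) := dist_le_pi_dist _ _ j
            _ ≤ dist f f' := ContinuousMap.dist_apply_le_dist z
            _ = dist f' f := dist_comm f f'
        have h1 : c/2 < dist (f (actX h q.1) j) (f (actX h q.2) j) := hq
        have h2 : dist (f' (actX h q.1) j) (f' (actX h q.2) j) > 0 := by
          have t1 := key (actX h q.1)
          have t2 := key (actX h q.2)
          have tri : dist (f (actX h q.1) j) (f (actX h q.2) j) ≤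
              dist (f (actX h q.1) j) (f' (actX h q.1) j) +
              dist (f' (actX h q.1) j) (f' (actX h q.2) j) +
              dist (f' (actX h q.2) j) (f (actX h q.2) j) := dist_triangle4 _ _ _ _
          rw [dist_comm (f' (actX h q.2) j)] at tri
          linarith
        intro hcon
        have : (fun g : Fin k → ℤ => f' (actX g q.1)) = fun g => f' (actX g q.2) :=
          congrArg Prod.fst hcon
        have := congrFun (congrFun this h) j
        rw [this] at h2
        simp at h2
      · set O : Set (X × X) := {q | π q.1 ≠ π q.2} with hO
        have : IsOpen O := by
          have : O = (fun q : X × X => (π q.1, π q.2)) ⁻¹' (Set.diagonal Y)ᶜ := by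
            ext q; simp [hO, Set.diagonal]
          rw [this]
          exact (isClosed_diagonal.isOpen_compl).preimage
            ((hπc.comp continuous_fst).prodMk (hπc.comp continuous_snd))
        refine ⟨O, 1, this, hππ, one_pos, ?_⟩
        intro f' _ q hq hcon
        exact hq (congrArg Prod.snd hcon)
    choose O r hOopen hOmem hrpos hrob using claim
    obtain ⟨t, ht⟩ := hKc.elim_finite_subcover O hOopen
      (fun q hq => Set.mem_iUnion.2 ⟨⟨q, hq⟩, hOmem ⟨q, hq⟩⟩)
    have htne : t.Nonempty := by
      obtain ⟨q, hq⟩ := hKne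
      obtain ⟨p, hpt, _⟩ := by
        have := ht hq
        rw [Set.mem_iUnion₂] at this
        exact this
      exact ⟨p, hpt⟩
    set rmin := (t.image r).min' (htne.image r) with hrmin
    have hrminpos : 0 < rmin := by
      obtain ⟨p, hpt, hpr⟩ := Finset.mem_image.1 ((t.image r).min'_mem (htne.image r))
      rw [hrmin, ← hpr]
      exact hrpos p
    refine ⟨rmin, hrminpos, fun f' hf' x y hxy => ?_⟩
    have hxyK : (x, y) ∈ K := hxy
    obtain ⟨p, hpt, hpO⟩ := by
      have := ht hxyK
      rw [Set.mem_iUnion₂] at this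
      exact this
    have : dist f' f < r p :=
      lt_of_lt_of_le hf' ((t.image r).min'_le (r p) (Finset.mem_image_of_mem r hpt))
    exact hrob p f' this (x, y) hpO

end OpenPart


-- widim extraction lemma
lemma widim_extract {k : ℕ} {X : Type*} [MetricSpace X] [CompactSpace X]
    (actX : (Fin k → ℤ) → X → X)
    (L : ℕ) (hmdim : 2 * mdimZk k X actX < (L : ℝ≥0∞)) (ε : ℝ) (hε : 0 < ε) :
    ∃ n : ℕ, 0 < n ∧ ∃ (α : Finset (Set X)) (W : ℕ),
      IsFinOpenCover α ∧
      (∀ U ∈ α, ∀ x ∈ U, ∀ y ∈ U,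
        (⨆ g : {g : Fin k → ℤ // ∀ j, 0 ≤ g j ∧ g j < (n : ℤ)},
          dist (actX g.1 x) (actX g.1 y)) ≤ ε) ∧
      2 * W < L * n ^ k ∧
      ∀ x : X, (α.filter fun U => x ∈ U).card ≤ W + 1 := by
  set u : ℕ → ℝ≥0∞ := fun n =>
      ((widimWith X (fun x y =>
          ⨆ g : {g : Fin k → ℤ // ∀ j, 0 ≤ g j ∧ g j < (n : ℤ)},
            dist (actX g.1 x) (actX g.1 y)) ε : ℕ∞) : ℝ≥0∞) / (n : ℝ≥0∞) ^ k with hu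
  have hΛ : Filter.limsup u Filter.atTop ≤ mdimZk k X actX := by
    rw [mdimZk]
    exact le_iSup₂ (f := fun (ε : ℝ) (_ : 0 < ε) => Filter.limsup (fun n : ℕ =>
      ((widimWith X (fun x y =>
          ⨆ g : {g : Fin k → ℤ // ∀ j, 0 ≤ g j ∧ g j < (n : ℤ)},
            dist (actX g.1 x) (actX g.1 y)) ε : ℕ∞) : ℝ≥0∞) / (n : ℝ≥0∞) ^ k)
      Filter.atTop) ε hε
  have h2Λ : 2 * Filter.limsup u Filter.atTop < (L : ℝ≥0∞) :=
    lt_of_le_of_lt (mul_le_mul_right hΛ 2) hmdim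
  have hΛlt : Filter.limsup u Filter.atTop < (L : ℝ≥0∞) / 2 := by
    rw [ENNReal.lt_div_iff_mul_lt (Or.inl (by norm_num)) (Or.inl (by norm_num))]
    rw [mul_comm]
    exact h2Λ
  have hev := Filter.eventually_lt_of_limsup_lt hΛlt
  rw [Filter.eventually_atTop] at hev
  obtain ⟨n₀, hn₀⟩ := hev
  set n := max n₀ 1 with hn
  have hn1 : 0 < n := lt_of_lt_of_le one_pos (le_max_right _ _)
  have hun : u n < (L : ℝ≥0∞) / 2 := hn₀ n (le_max_left _ _)
  set wON : ℕ∞ := widimWith X (fun x y =>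
      ⨆ g : {g : Fin k → ℤ // ∀ j, 0 ≤ g j ∧ g j < (n : ℤ)},
        dist (actX g.1 x) (actX g.1 y)) ε with hwON
  have hnk0 : ((n : ℝ≥0∞)) ^ k ≠ 0 := by
    apply pow_ne_zero
    exact_mod_cast hn1.ne'
  have hnkt : ((n : ℝ≥0∞)) ^ k ≠ ⊤ := by
    apply ENNReal.pow_ne_top
    exact ENNReal.natCast_ne_top n
  have hlt : (wON : ℝ≥0∞) < (L : ℝ≥0∞) / 2 * (n : ℝ≥0∞) ^ k := by
    rw [hu] at hun
    exact (ENNReal.div_lt_iff (Or.inl hnk0) (Or.inl hnkt)).1 hun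
  have hne : wON ≠ ⊤ := by
    intro h
    rw [h] at hlt
    simp at hlt
  obtain ⟨W, hW⟩ := WithTop.ne_top_iff_exists.1 hne
  have hWlt : 2 * W < L * n ^ k := by
    rw [← hW] at hlt
    have h1 : ((W : ℕ) : ℝ≥0∞) < (L : ℝ≥0∞) / 2 * (n : ℝ≥0∞) ^ k := by
      exact_mod_cast hlt
    have h2 : 2 * ((W : ℕ) : ℝ≥0∞) < 2 * ((L : ℝ≥0∞) / 2 * (n : ℝ≥0∞) ^ k) :=
      (ENNReal.mul_lt_mul_iff_right (by norm_num) (by norm_num)).2 h1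
    have h3 : 2 * ((L : ℝ≥0∞) / 2 * (n : ℝ≥0∞) ^ k) = (L : ℝ≥0∞) * (n : ℝ≥0∞) ^ k := by
      rw [← mul_assoc, ENNReal.mul_div_cancel' (by norm_num) (by norm_num)]
    rw [h3] at h2
    have h4 : ((2 * W : ℕ) : ℝ≥0∞) < ((L * n ^ k : ℕ) : ℝ≥0∞) := by
      push_cast
      exact h2
    exact_mod_cast h4
  have hwlt2 : wON < ((W + 1 : ℕ) : ℕ∞) := by
    rw [← hW]
    exact Nat.cast_lt.2 (Nat.lt_succ_self W)
  have hwne : wON ≠ ⊤ := hne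
  rw [hwON, widimWith, iInf_lt_iff] at hwlt2
  obtain ⟨α, hα⟩ := hwlt2
  rw [iInf_lt_iff] at hα
  obtain ⟨⟨hcov, hmesh⟩, hord⟩ := hα
  refine ⟨n, hn1, α, W, hcov, hmesh, hWlt, ?_⟩
  intro x
  have h1 : ((α.filter fun U => x ∈ U).card : ℕ∞) ≤
      ⨆ x : X, ((α.filter fun U => x ∈ U).card : ℕ∞) :=
    le_iSup (fun x : X => ((α.filter fun U => x ∈ U).card : ℕ∞)) x
  have h2 : (⨆ x : X, ((α.filter fun U => x ∈ U).card : ℕ∞)) ≤ coverOrd α + 1 := by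
    rw [coverOrd]
    exact le_tsub_add
  have hcne : coverOrd α ≠ ⊤ := by
    intro h
    rw [h] at hord
    exact absurd hord (by simp)
  have h3 : coverOrd α + 1 ≤ (W : ℕ∞) + 1 := by
    rw [ENat.add_one_le_iff hcne]
    exact_mod_cast hord
  have h4 := le_trans h1 (le_trans h2 h3)
  have h5 : ((α.filter fun U => x ∈ U).card : ℕ∞) ≤ ((W + 1 : ℕ) : ℕ∞) := by
    rw [Nat.cast_add, Nat.cast_one]
    exact h4
  exact_mod_cast h5

lemma finite_box {k n : ℕ} : Finite {g : Fin k → ℤ // ∀ j, 0 ≤ g j ∧ g j < (n : ℤ)} := by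
  apply Finite.of_injective (fun g : {g : Fin k → ℤ // ∀ j, 0 ≤ g j ∧ g j < (n : ℤ)} =>
    (fun j => (⟨(g.1 j).toNat, by have := g.2 j; omega⟩ : Fin n) : Fin k → Fin n))
  intro g h hgh
  apply Subtype.ext
  funext j
  have hj := congrFun hgh j
  have h1 := (g.2 j).1
  have h2 := (h.2 j).1
  have h3 : ((g.1 j).toNat : ℤ) = ((h.1 j).toNat : ℤ) := by
    have := congrArg (fun x : Fin n => ((x : ℕ) : ℤ)) hj
    simpa using this
  rw [Int.toNat_of_nonneg h1, Int.toNat_of_nonneg h2] at h3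
  exact h3

lemma dist_le_rho {k n : ℕ} {X : Type*} [MetricSpace X] (actX : (Fin k → ℤ) → X → X)
    (x y : X) (g : Fin k → ℤ) (hg : ∀ j, 0 ≤ g j ∧ g j < (n : ℤ)) :
    dist (actX g x) (actX g y) ≤
      ⨆ g' : {g' : Fin k → ℤ // ∀ j, 0 ≤ g' j ∧ g' j < (n : ℤ)},
        dist (actX g'.1 x) (actX g'.1 y) := by
  haveI := finite_box (k := k) (n := n)
  exact le_ciSup (f := fun g' : {g' : Fin k → ℤ // ∀ j, 0 ≤ g' j ∧ g' j < (n : ℤ)} =>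
    dist (actX g'.1 x) (actX g'.1 y)) (Set.Finite.bddAbove (Set.finite_range _)) ⟨g, hg⟩

lemma dense_good {k : ℕ} {X Y : Type*} [MetricSpace X] [CompactSpace X]
    [MetricSpace Y] [CompactSpace Y]
    (actX : (Fin k → ℤ) → X → X) (actY : (Fin k → ℤ) → Y → Y)
    (hX0 : actX 0 = id) (hXadd : ∀ g h, actX (g + h) = actX g ∘ actX h)
    (hXc : ∀ g, Continuous (actX g))
    (hY0 : actY 0 = id) (hYadd : ∀ g h, actY (g + h) = actY g ∘ actY h)
    (hYc : ∀ g, Continuous (actY g))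
    (π : X → Y) (hπc : Continuous π)
    (hπe : ∀ g x, π (actX g x) = actY g (π x))
    (D L : ℕ)
    (hRokLE : RokhlinDimLE k actY D)
    (hmdim : 2 * mdimZk k X actX < (L : ℝ≥0∞)) (η : ℝ) (hη : 0 < η) :
    Dense {f : C(X, Fin ((D + 1) * L) → Set.Icc (0:ℝ) 1) |
      ∀ x y : X, η ≤ dist x y →
        ((fun g : Fin k → ℤ => f (actX g x)), π x) ≠
        ((fun g : Fin k → ℤ => f (actX g y)), π y)} := by
  rw [Metric.dense_iff]
  intro f₀ r hr
  by_cases hXne : Nonempty X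
  case neg =>
    refine ⟨f₀, mem_ball_self hr, fun x y hxy => absurd ⟨x⟩ hXne⟩
  case pos =>
  haveI : Nonempty X := hXne
  -- group action facts
  have hXcancel : ∀ (g : Fin k → ℤ) (x : X), actX g (actX (-g) x) = x := by
    intro g x
    have h1 := congrFun (hXadd g (-g)) x
    rw [add_neg_cancel, hX0] at h1
    exact h1.symm
  have hXcancel' : ∀ (g : Fin k → ℤ) (x : X), actX (-g) (actX g x) = x := by
    intro g x
    have h1 := congrFun (hXadd (-g) g) x
    rw [neg_add_cancel, hX0] at h1
    exact h1.symm
  have hYcancel : ∀ (g : Fin k → ℤ) (y : Y), actY g (actY (-g) y) = y := by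
    intro g y
    have h1 := congrFun (hYadd g (-g)) y
    rw [add_neg_cancel, hY0] at h1
    exact h1.symm
  have hYcancel' : ∀ (g : Fin k → ℤ) (y : Y), actY (-g) (actY g y) = y := by
    intro g y
    have h1 := congrFun (hYadd (-g) g) y
    rw [neg_add_cancel, hY0] at h1
    exact h1.symm
  have hYinj : ∀ g : Fin k → ℤ, Function.Injective (actY g) := by
    intro g a b hab
    have := congrArg (actY (-g)) hab
    rwa [hYcancel' g a, hYcancel' g b] at this
  have hYimg : ∀ (g : Fin k → ℤ) (S : Set Y), actY g '' S = actY (-g) ⁻¹' S := by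
    intro g S
    ext y
    constructor
    · rintro ⟨u, hu, rfl⟩
      rwa [Set.mem_preimage, hYcancel' g u]
    · intro hy
      exact ⟨actY (-g) y, hy, hYcancel g y⟩
  -- parameters
  set δ1 : ℝ := min r 1 / 4 with hδ1def
  have hδ1 : 0 < δ1 := by
    rw [hδ1def]
    have : 0 < min r 1 := lt_min hr one_pos
    linarith
  have huc := CompactSpace.uniformContinuous_of_continuous f₀.continuous
  rw [Metric.uniformContinuous_iff] at huc
  obtain ⟨μ, hμ, hμs⟩ := huc δ1 hδ1
  set ε : ℝ := min (η/2) (μ/2) with hεdef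
  have hε : 0 < ε := lt_min (by linarith) (by linarith)
  -- widim cover
  obtain ⟨n, hn1, α, W, hcov, hmesh, hW, hcard⟩ := widim_extract actX L hmdim ε hε
  -- towers
  obtain ⟨U, hUopen, hUdisj, hUcover⟩ := hRokLE n hn1
  -- lattice cube
  set em : (Fin k → Fin n) → (Fin k → ℤ) := fun a j => ((a j : ℕ) : ℤ) with hemdef
  have hembd : ∀ a : Fin k → Fin n, ∀ j, 0 ≤ em a j ∧ em a j < (n : ℤ) := by
    intro a j
    simp only [hemdef]
    constructor
    · exact Int.ofNat_nonneg _
    · exact_mod_cast (a j).2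
  have heminj : Function.Injective em := by
    intro a b hab
    funext j
    have := congrFun hab j
    simp only [hemdef] at this
    exact Fin.ext (by exact_mod_cast this)
  -- towers as open sets
  set Wt : Fin (D+1) × (Fin k → Fin n) → Set Y := fun p => actY (em p.2) '' U p.1 with hWtdef
  have hWtopen : ∀ p, IsOpen (Wt p) := by
    intro p
    rw [hWtdef]
    simp only
    rw [hYimg]
    exact (hUopen p.1).preimage (hYc _)
  have hWtcover : (Set.univ : Set Y) ⊆ ⋃ p, Wt p := by
    intro y _
    obtain ⟨i, g, hg, hy⟩ := hUcover y
    set a : Fin k → Fin n := fun j => ⟨(g j).toNat, by have := hg j; omega⟩ with hadef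
    have hema : em a = g := by
      funext j
      simp only [hemdef, hadef]
      have := (hg j).1
      omega
    refine Set.mem_iUnion.2 ⟨(i, a), ?_⟩
    rw [hWtdef]
    simp only
    rw [hema]
    exact hy
  obtain ⟨δL, hδL, hLeb⟩ := lebesgue_number_lemma_of_metric isCompact_univ hWtopen hWtcover
  -- shrunk closed towers
  set C' : Fin (D+1) × (Fin k → Fin n) → Set Y :=
    fun p => {y | ∀ z, dist z y < δL/2 → z ∈ Wt p} with hC'def
  have hC'closed : ∀ p, IsClosed (C' p) := by
    intro p
    rw [← isOpen_compl_iff, Metric.isOpen_iff]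
    intro y hy
    simp only [hC'def, Set.mem_compl_iff, Set.mem_setOf_eq, not_forall] at hy
    obtain ⟨z, hz1, hz2⟩ := hy
    refine ⟨δL/2 - dist z y, by linarith, ?_⟩
    intro y' hy'
    rw [mem_ball] at hy'
    simp only [hC'def, Set.mem_compl_iff, Set.mem_setOf_eq, not_forall]
    refine ⟨z, ?_, hz2⟩
    have := dist_triangle z y' y
    have h2 : dist z y' ≤ dist z y + dist y' y := by
      rw [dist_comm y' y]
      exact dist_triangle z y y'
    linarith
  have hC'sub : ∀ p, C' p ⊆ Wt p := by
    intro p y hy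
    exact hy y (by simp [hδL])
  have hC'cover : ∀ y : Y, ∃ p, y ∈ C' p := by
    intro y
    obtain ⟨p, hp⟩ := hLeb y (Set.mem_univ y)
    refine ⟨p, ?_⟩
    intro z hz
    exact hp (by rw [mem_ball]; linarith)
  set C : Fin (D+1) → Set Y := fun i => ⋃ a : Fin k → Fin n, actY (em a) ⁻¹' C' (i, a)
    with hCdef
  have hCclosed : ∀ i, IsClosed (C i) :=
    fun i => isClosed_iUnion_of_finite fun a => (hC'closed (i, a)).preimage (hYc (em a))
  have hCsub : ∀ i, C i ⊆ U i := by
    intro i y hy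
    obtain ⟨a, ha⟩ := Set.mem_iUnion.1 hy
    have h1 : actY (em a) y ∈ Wt (i, a) := hC'sub (i, a) ha
    obtain ⟨u, hu, huy⟩ := h1
    rwa [← hYinj (em a) huy]
  have hCbase : ∀ w : Y, ∃ (i : Fin (D+1)) (a : Fin k → Fin n),
      actY (-(em a)) w ∈ C i := by
    intro w
    obtain ⟨⟨i, a⟩, hp⟩ := hC'cover w
    refine ⟨i, a, Set.mem_iUnion.2 ⟨a, ?_⟩⟩
    rw [Set.mem_preimage, hYcancel (em a) w]
    exact hp
  -- Urysohn functions
  have hθex : ∀ i : Fin (D+1), ∃ θ : C(Y, ℝ),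
      Set.EqOn θ 0 ((U i)ᶜ) ∧ Set.EqOn θ 1 (C i) ∧ ∀ y, θ y ∈ Set.Icc (0:ℝ) 1 :=
    fun i => exists_continuous_zero_one_of_isClosed (hUopen i).isClosed_compl (hCclosed i)
      (Set.disjoint_left.2 fun y hyc hyC => hyc (hCsub i hyC))
  choose θ hθ0 hθ1 hθI using hθex
  -- partition of unity
  obtain ⟨φ, hφc, hφnn, hφsum, hφpos⟩ := exists_partition α hcov
  -- choice of points in cover elements
  set xp : Set X → X := fun V => if h : V.Nonempty then h.choose else Classical.arbitrary X
    with hxpdef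
  have hxp : ∀ V : Set X, V.Nonempty → xp V ∈ V := by
    intro V h
    simp only [hxpdef, dif_pos h]
    exact h.choose_spec
  -- enumeration of the cover
  set M := α.card with hMdef
  set eα : {x // x ∈ α} ≃ Fin M := α.equivFin with heαdef
  set idx : {x // x ∈ α} → ℕ := fun V => (eα V : ℕ) with hidxdef
  have hidxlt : ∀ V, idx V < M := fun V => (eα V).2
  have hidxinj : Function.Injective idx := by
    intro a b hab
    exact eα.injective (Fin.ext hab)
  have hidxsymm : ∀ (V : {x // x ∈ α}) (h : idx V < M), eα.symm ⟨idx V, h⟩ = V := by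
    intro V h
    have : (⟨idx V, h⟩ : Fin M) = eα V := Fin.ext rfl
    rw [this, Equiv.symm_apply_apply]
  -- coordinate embedding
  set emb : Fin (D+1) → Fin L → Fin ((D+1)*L) := fun i l => finProdFinEquiv (i, l) with hembdef
  -- general position points, one family per color
  have hκcard : Fintype.card ((Fin k → Fin n) × Fin L) = n ^ k * L := by
    simp [Fintype.card_prod, Fintype.card_fun]
  set wt : Fin (D+1) → ℕ → ((Fin k → Fin n) × Fin L) → ℝ := fun i m q =>
    if h : m < M then (f₀ (actX (em q.1) (xp ((eα.symm ⟨m, h⟩ : {x // x ∈ α}) : Set X)))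
      (emb i q.2) : ℝ) else 0 with hwtdef
  have hwtIcc : ∀ i m q, wt i m q ∈ Set.Icc (0:ℝ) 1 := by
    intro i m q
    simp only [hwtdef]
    split
    · exact (f₀ _ _).2
    · exact ⟨le_refl 0, zero_le_one⟩
  have hvex : ∀ i : Fin (D+1), ∃ v : ℕ → ((Fin k → Fin n) × Fin L) → ℝ,
      (∀ j, (∀ q, v j q ∈ Set.Icc (0:ℝ) 1) ∧ ∀ q, |v j q - wt i j q| ≤ δ1) ∧
      ∀ j < M, ∀ t : Finset ℕ, (∀ a ∈ t, a < j) →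
        t.card ≤ Fintype.card ((Fin k → Fin n) × Fin L) →
        homv (v j) ∉ Submodule.span ℝ
          (((t.image fun a => homv (v a)) : Finset (Option ((Fin k → Fin n) × Fin L) → ℝ)) :
            Set (Option ((Fin k → Fin n) × Fin L) → ℝ)) :=
    fun i => exists_gp M (wt i) (fun m q => hwtIcc i m q) δ1 hδ1
  choose vs hvIcc hvAV using hvex
  -- the blending coefficients
  set Θ : Fin (D+1) → (Fin k → Fin n) → Y → ℝ := fun i a y => θ i (actY (-(em a)) y) with hΘdef
  have hΘmem : ∀ i a y, Θ i a y ∈ Set.Icc (0:ℝ) 1 := fun i a y => hθI i _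
  have hΘU : ∀ i a y, Θ i a y ≠ 0 → actY (-(em a)) y ∈ U i := by
    intro i a y h
    by_contra hc
    exact h (hθ0 i hc)
  have hΘactive : ∀ (i : Fin (D+1)) (y : Y) (a b : Fin k → Fin n),
      Θ i a y ≠ 0 → Θ i b y ≠ 0 → a = b := by
    intro i y a b ha hb
    by_contra hab
    have hya : y ∈ actY (em a) '' closure (U i) :=
      ⟨actY (-(em a)) y, subset_closure (hΘU i a y ha), hYcancel _ _⟩
    have hyb : y ∈ actY (em b) '' closure (U i) :=
      ⟨actY (-(em b)) y, subset_closure (hΘU i b y hb), hYcancel _ _⟩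
    exact Set.disjoint_left.1 (hUdisj i (em a) (em b) (hembd a) (hembd b)
      (fun h => hab (heminj h))) hya hyb
  -- the replacement values
  set R : Fin (D+1) → (Fin k → Fin n) → Fin L → X → ℝ := fun i a l x =>
    ∑ V ∈ α.attach, φ (V : Set X) (actX (-(em a)) x) * vs i (idx V) (a, l) with hRdef
  have hRIcc : ∀ i a l x, R i a l x ∈ Set.Icc (0:ℝ) 1 := by
    intro i a l x
    simp only [hRdef]
    constructor
    · apply Finset.sum_nonneg
      intro V hV
      exact mul_nonneg (hφnn _ _) ((hvIcc i (idx V)).1 (a,l)).1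
    · calc ∑ V ∈ α.attach, φ (V : Set X) (actX (-(em a)) x) * vs i (idx V) (a, l)
          ≤ ∑ V ∈ α.attach, φ (V : Set X) (actX (-(em a)) x) * 1 := by
            apply Finset.sum_le_sum
            intro V hV
            exact mul_le_mul_of_nonneg_left ((hvIcc i (idx V)).1 (a,l)).2 (hφnn _ _)
        _ = 1 := by
            simp only [mul_one]
            rw [Finset.sum_attach α (fun V => φ V (actX (-(em a)) x))]
            exact hφsum _
  have hRclose : ∀ i a l x, |R i a l x - (f₀ x (emb i l) : ℝ)| ≤ 2*δ1 := by
    intro i a l x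
    set z := actX (-(em a)) x with hzdef
    have hxz : x = actX (em a) z := (hXcancel (em a) x).symm
    have hsum1 : ∑ V ∈ α.attach, φ (V:Set X) z = 1 := by
      rw [Finset.sum_attach α (fun V => φ V z)]
      exact hφsum z
    have hexp : R i a l x - (f₀ x (emb i l) : ℝ)
        = ∑ V ∈ α.attach, φ (V:Set X) z * (vs i (idx V) (a,l) - (f₀ x (emb i l) : ℝ)) := by
      simp only [hRdef, mul_sub]
      rw [Finset.sum_sub_distrib, ← Finset.sum_mul, hsum1, one_mul]
    rw [hexp]
    have hterm : ∀ V ∈ α.attach,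
        |φ (V:Set X) z * (vs i (idx V) (a,l) - (f₀ x (emb i l):ℝ))|
        ≤ φ (V:Set X) z * (2*δ1) := by
      intro V hV
      rcases eq_or_lt_of_le (hφnn (V:Set X) z) with h0 | hpos
      · rw [← h0]
        simp
      · rw [abs_mul, abs_of_nonneg (hφnn _ _)]
        apply mul_le_mul_of_nonneg_left _ (hφnn _ _)
        have hzV : z ∈ (V:Set X) := hφpos _ _ hpos
        have hVne : (V:Set X).Nonempty := ⟨z, hzV⟩
        have hxpV : xp (V:Set X) ∈ (V:Set X) := hxp _ hVne
        have hwt : wt i (idx V) (a,l) = (f₀ (actX (em a) (xp (V:Set X))) (emb i l) : ℝ) := by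
          simp only [hwtdef, dif_pos (hidxlt V), hidxsymm V (hidxlt V)]
        have hvw : |vs i (idx V) (a,l) - wt i (idx V) (a,l)| ≤ δ1 := (hvIcc i (idx V)).2 (a,l)
        have hρ : dist (actX (em a) (xp (V:Set X))) (actX (em a) z) ≤ ε :=
          le_trans (dist_le_rho actX (xp (V:Set X)) z (em a) (hembd a))
            (hmesh (V:Set X) V.2 (xp (V:Set X)) hxpV z hzV)
        have hfd : dist (f₀ (actX (em a) (xp (V:Set X)))) (f₀ (actX (em a) z)) < δ1 := by
          apply hμs
          have : ε ≤ μ/2 := min_le_right _ _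
          linarith
        have hfcoord : |(f₀ (actX (em a) (xp (V:Set X))) (emb i l) : ℝ) - (f₀ x (emb i l) : ℝ)| ≤ δ1 := by
          rw [hxz]
          have h1 : dist (f₀ (actX (em a) (xp (V:Set X))) (emb i l))
              (f₀ (actX (em a) z) (emb i l)) ≤
              dist (f₀ (actX (em a) (xp (V:Set X)))) (f₀ (actX (em a) z)) :=
            dist_le_pi_dist _ _ _
          rw [Subtype.dist_eq, Real.dist_eq] at h1
          linarith
        calc |vs i (idx V) (a,l) - (f₀ x (emb i l):ℝ)|
            ≤ |vs i (idx V) (a,l) - wt i (idx V) (a,l)|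
              + |wt i (idx V) (a,l) - (f₀ x (emb i l):ℝ)| := abs_sub_le _ _ _
          _ ≤ δ1 + δ1 := by
              apply add_le_add hvw
              rw [hwt]
              exact hfcoord
          _ = 2*δ1 := by ring
    calc |∑ V ∈ α.attach, φ (V:Set X) z * (vs i (idx V) (a,l) - (f₀ x (emb i l) : ℝ))|
        ≤ ∑ V ∈ α.attach, |φ (V:Set X) z * (vs i (idx V) (a,l) - (f₀ x (emb i l) : ℝ))| :=
          Finset.abs_sum_le_sum_abs _ _
      _ ≤ ∑ V ∈ α.attach, φ (V:Set X) z * (2*δ1) := Finset.sum_le_sum hterm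
      _ = 2*δ1 := by rw [← Finset.sum_mul, hsum1, one_mul]
  -- the perturbed coordinate functions
  set P : Fin (D+1) → Fin L → X → ℝ := fun i l x => (f₀ x (emb i l) : ℝ) +
    ∑ a : Fin k → Fin n, Θ i a (π x) * (R i a l x - (f₀ x (emb i l) : ℝ)) with hPdef
  have hPprop : ∀ i l x, P i l x ∈ Set.Icc (0:ℝ) 1 ∧ |P i l x - (f₀ x (emb i l) : ℝ)| ≤ 2*δ1 := by
    intro i l x
    by_cases hall : ∀ a : Fin k → Fin n, Θ i a (π x) = 0
    · have hz : ∑ a : Fin k → Fin n, Θ i a (π x) * (R i a l x - (f₀ x (emb i l) : ℝ)) = 0 :=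
        Finset.sum_eq_zero (fun a _ => by rw [hall a, zero_mul])
      simp only [hPdef]
      rw [hz, add_zero]
      refine ⟨(f₀ x (emb i l)).2, ?_⟩
      rw [sub_self, abs_zero]
      linarith
    · push_neg at hall
      obtain ⟨a₀, ha₀⟩ := hall
      have hsum : ∑ a : Fin k → Fin n, Θ i a (π x) * (R i a l x - (f₀ x (emb i l) : ℝ))
          = Θ i a₀ (π x) * (R i a₀ l x - (f₀ x (emb i l) : ℝ)) := by
        apply Finset.sum_eq_single_of_mem a₀ (Finset.mem_univ a₀)
        intro b _ hb
        have hb0 : Θ i b (π x) = 0 := by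
          by_contra hb0
          exact hb (hΘactive i (π x) b a₀ hb0 ha₀)
        rw [hb0, zero_mul]
      simp only [hPdef]
      rw [hsum]
      obtain ⟨hΘ0, hΘ1⟩ := hΘmem i a₀ (π x)
      obtain ⟨hR0, hR1⟩ := hRIcc i a₀ l x
      obtain ⟨hf0 , hf1⟩ := (f₀ x (emb i l)).2
      constructor
      · have hid : (f₀ x (emb i l) : ℝ) + Θ i a₀ (π x) * (R i a₀ l x - (f₀ x (emb i l) : ℝ))
            = (1 - Θ i a₀ (π x)) * (f₀ x (emb i l) : ℝ) + Θ i a₀ (π x) * R i a₀ l x := by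
          ring
        rw [hid]
        constructor
        · have h1 := mul_nonneg (by linarith : (0:ℝ) ≤ 1 - Θ i a₀ (π x)) hf0
          have h2 := mul_nonneg hΘ0 hR0
          linarith
        · have h1 : (1 - Θ i a₀ (π x)) * (f₀ x (emb i l) : ℝ) ≤ (1 - Θ i a₀ (π x)) * 1 :=
            mul_le_mul_of_nonneg_left hf1 (by linarith)
          have h2 : Θ i a₀ (π x) * R i a₀ l x ≤ Θ i a₀ (π x) * 1 :=
            mul_le_mul_of_nonneg_left hR1 hΘ0
          rw [mul_one] at h1 h2
          linarith
      · rw [add_sub_cancel_left, abs_mul, abs_of_nonneg hΘ0]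
        have h3 := hRclose i a₀ l x
        have h4 : (0:ℝ) ≤ |R i a₀ l x - (f₀ x (emb i l) : ℝ)| := abs_nonneg _
        nlinarith
  have hPc : ∀ i l, Continuous (fun x => P i l x) := by
    intro i l
    simp only [hPdef]
    apply Continuous.add
    · exact continuous_subtype_val.comp ((continuous_apply (emb i l)).comp f₀.continuous)
    · apply continuous_finset_sum
      intro a _
      apply Continuous.mul
      · exact (θ i).continuous.comp ((hYc _).comp hπc)
      · apply Continuous.sub
        · simp only [hRdef]
          apply continuous_finset_sum
          intro V _
          exact ((hφc (V:Set X)).comp (hXc _)).mul continuous_const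
        · exact continuous_subtype_val.comp ((continuous_apply (emb i l)).comp f₀.continuous)
  set fnew : C(X, Fin ((D+1)*L) → Set.Icc (0:ℝ) 1) :=
    ⟨fun x j => ⟨P (finProdFinEquiv.symm j).1 (finProdFinEquiv.symm j).2 x,
        (hPprop (finProdFinEquiv.symm j).1 (finProdFinEquiv.symm j).2 x).1⟩, by
      apply continuous_pi
      intro j
      exact Continuous.subtype_mk (hPc _ _) _⟩ with hfnewdef
  have hjemb : ∀ j : Fin ((D+1)*L),
      emb (finProdFinEquiv.symm j).1 (finProdFinEquiv.symm j).2 = j := by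
    intro j
    simp only [hembdef]
    rw [show ((finProdFinEquiv.symm j).1, (finProdFinEquiv.symm j).2) = finProdFinEquiv.symm j
      from rfl]
    exact Equiv.apply_symm_apply _ _
  have hdistf : dist fnew f₀ ≤ 2*δ1 := by
    rw [ContinuousMap.dist_le (by linarith)]
    intro x
    rw [dist_pi_le_iff (by linarith)]
    intro j
    rw [Subtype.dist_eq, Real.dist_eq]
    have := (hPprop (finProdFinEquiv.symm j).1 (finProdFinEquiv.symm j).2 x).2
    rw [hjemb j] at this
    exact this
  have hballmem : fnew ∈ ball f₀ r := by
    rw [mem_ball]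
    have h1 : min r 1 ≤ r := min_le_left _ _
    calc dist fnew f₀ ≤ 2*δ1 := hdistf
      _ < r := by rw [hδ1def]; linarith
  -- key evaluation
  have hEval : ∀ (i : Fin (D+1)) (zz : X), π zz ∈ C i → ∀ (b : Fin k → Fin n) (l : Fin L),
      (fnew (actX (em b) zz) (emb i l) : ℝ)
        = ∑ V ∈ α.attach, φ (V:Set X) zz * vs i (idx V) (b,l) := by
    intro i zz hzz b l
    have hsymm : finProdFinEquiv.symm (emb i l) = (i, l) := by
      simp only [hembdef]
      exact Equiv.symm_apply_apply _ _
    have hcoord : (fnew (actX (em b) zz) (emb i l) : ℝ) = P i l (actX (em b) zz) := by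
      simp only [hfnewdef, ContinuousMap.coe_mk, hsymm]
    rw [hcoord]
    have hπb : π (actX (em b) zz) = actY (em b) (π zz) := hπe _ _
    have hΘb : Θ i b (π (actX (em b) zz)) = 1 := by
      simp only [hΘdef]
      rw [hπb, hYcancel' (em b) (π zz)]
      exact hθ1 i hzz
    have hsum : ∑ a : Fin k → Fin n, Θ i a (π (actX (em b) zz)) *
          (R i a l (actX (em b) zz) - (f₀ (actX (em b) zz) (emb i l):ℝ))
        = Θ i b (π (actX (em b) zz)) *
          (R i b l (actX (em b) zz) - (f₀ (actX (em b) zz) (emb i l):ℝ)) := by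
      apply Finset.sum_eq_single_of_mem b (Finset.mem_univ b)
      intro c _ hcb
      have hc0 : Θ i c (π (actX (em b) zz)) = 0 := by
        by_contra hc0
        exact hcb (hΘactive i (π (actX (em b) zz)) c b hc0 (by rw [hΘb]; norm_num))
      rw [hc0, zero_mul]
    simp only [hPdef]
    rw [hsum, hΘb, one_mul, add_sub_cancel]
    simp only [hRdef]
    rw [hXcancel' (em b) zz]
  -- conclusion: fnew has the injectivity property at scale η
  refine ⟨fnew, hballmem, ?_⟩
  intro x y hdxy hcon
  have hfun : (fun g : Fin k → ℤ => fnew (actX g x)) = fun g => fnew (actX g y) :=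
    congrArg Prod.fst hcon
  have hπxy : π x = π y := congrArg Prod.snd hcon
  obtain ⟨i, a, hbase⟩ := hCbase (π x)
  set z := actX (-(em a)) x with hzdef
  set z' := actX (-(em a)) y with hz'def
  have hπz : π z ∈ C i := by
    rw [hzdef, hπe]
    exact hbase
  have hπz' : π z' ∈ C i := by
    rw [hz'def, hπe, ← hπxy]
    exact hbase
  have hkey : ∀ q : (Fin k → Fin n) × Fin L,
      ∑ V ∈ α.attach, φ (V:Set X) z * vs i (idx V) q
        = ∑ V ∈ α.attach, φ (V:Set X) z' * vs i (idx V) q := by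
    intro q
    have h1 := hEval i z hπz q.1 q.2
    have h2 := hEval i z' hπz' q.1 q.2
    have h3 : actX (em q.1) z = actX (em q.1 + -(em a)) x := by
      rw [hXadd (em q.1) (-(em a))]
      rfl
    have h3' : actX (em q.1) z' = actX (em q.1 + -(em a)) y := by
      rw [hXadd (em q.1) (-(em a))]
      rfl
    have h4 := congrFun hfun (em q.1 + -(em a))
    have h5 : (fnew (actX (em q.1) z) (emb i q.2) : ℝ)
        = (fnew (actX (em q.1) z') (emb i q.2) : ℝ) := by
      rw [h3, h3', h4]
    calc ∑ V ∈ α.attach, φ (V:Set X) z * vs i (idx V) q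
        = (fnew (actX (em q.1) z) (emb i q.2) : ℝ) := h1.symm
      _ = (fnew (actX (em q.1) z') (emb i q.2) : ℝ) := h5
      _ = ∑ V ∈ α.attach, φ (V:Set X) z' * vs i (idx V) q := h2
  -- general position forces equal barycentric coordinates
  set sU : Finset {x // x ∈ α} :=
    α.attach.filter (fun V : {x // x ∈ α} => φ (V:Set X) z ≠ 0 ∨ φ (V:Set X) z' ≠ 0) with hsUdef
  have hφcard : ∀ zz : X, (α.attach.filter fun V : {x // x ∈ α} => φ (V:Set X) zz ≠ 0).card ≤ W + 1 := by
    intro zz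
    have hle : (α.attach.filter fun V : {x // x ∈ α} => φ (V:Set X) zz ≠ 0).card
        ≤ (α.filter (fun V => zz ∈ V)).card := by
      apply Finset.card_le_card_of_injOn (fun V : {x // x ∈ α} => (V:Set X))
      · intro V hV
        rw [Finset.mem_coe, Finset.mem_filter] at hV
        simp only [Finset.mem_coe, Finset.mem_filter]
        exact ⟨V.2, hφpos _ _ (lt_of_le_of_ne (hφnn _ _) (Ne.symm hV.2))⟩
      · exact fun a _ b _ h => Subtype.ext h
    exact le_trans hle (hcard zz)
  have hsUcard : sU.card ≤ 2*W + 2 := by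
    rw [hsUdef, Finset.filter_or]
    calc ((α.attach.filter fun V : {x // x ∈ α} => φ (V:Set X) z ≠ 0) ∪
          (α.attach.filter fun V : {x // x ∈ α} => φ (V:Set X) z' ≠ 0)).card
        ≤ (α.attach.filter fun V : {x // x ∈ α} => φ (V:Set X) z ≠ 0).card +
          (α.attach.filter fun V : {x // x ∈ α} => φ (V:Set X) z' ≠ 0).card := Finset.card_union_le _ _
      _ ≤ (W+1) + (W+1) := add_le_add (hφcard z) (hφcard z')
      _ = 2*W+2 := by ring
  set sN : Finset ℕ := sU.image idx with hsNdef
  have hsNcard : sN.card ≤ Fintype.card ((Fin k → Fin n) × Fin L) + 1 := by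
    rw [hsNdef, Finset.card_image_of_injective _ hidxinj, hκcard]
    have h1 : 2*W + 1 ≤ L * n ^ k := Nat.succ_le_of_lt hW
    have h2 : L * n ^ k = n ^ k * L := mul_comm _ _
    calc sU.card ≤ 2*W + 2 := hsUcard
      _ ≤ L * n ^ k + 1 := by omega
      _ = n ^ k * L + 1 := by rw [h2]
  set cc : ℕ → ℝ := fun m => if h : m < M then
      φ ((eα.symm ⟨m,h⟩ : {x // x ∈ α}) : Set X) z
        - φ ((eα.symm ⟨m,h⟩ : {x // x ∈ α}) : Set X) z' else 0 with hccdef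
  have hccidx : ∀ V : {x // x ∈ α}, cc (idx V) = φ (V:Set X) z - φ (V:Set X) z' := by
    intro V
    simp only [hccdef, dif_pos (hidxlt V), hidxsymm V (hidxlt V)]
  have hinjOn : ∀ x ∈ sU, ∀ y ∈ sU, idx x = idx y → x = y := fun x _ y _ h => hidxinj h
  have hccext : ∀ V ∈ α.attach, V ∉ sU → φ (V:Set X) z - φ (V:Set X) z' = 0 := by
    intro V hV hVn
    rw [hsUdef, Finset.mem_filter] at hVn
    push_neg at hVn
    obtain ⟨h1, h2⟩ := hVn hV
    rw [h1, h2, sub_zero]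
  have hsum0 : ∑ m ∈ sN, cc m = 0 := by
    rw [hsNdef, Finset.sum_image hinjOn]
    rw [Finset.sum_congr rfl (fun V _ => hccidx V)]
    rw [Finset.sum_subset (Finset.filter_subset _ _) hccext]
    rw [Finset.sum_sub_distrib, Finset.sum_attach α (fun V => φ V z),
      Finset.sum_attach α (fun V => φ V z'), hφsum z, hφsum z', sub_self]
  have hcomb : ∑ m ∈ sN, cc m • vs i m = 0 := by
    rw [hsNdef, Finset.sum_image hinjOn]
    rw [Finset.sum_congr rfl (fun V _ => by rw [hccidx V])]
    rw [Finset.sum_subset (Finset.filter_subset _ _)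
      (fun V hV hVn => by rw [hccext V hV hVn, zero_smul])]
    funext q
    rw [Finset.sum_apply]
    simp only [Pi.smul_apply, smul_eq_mul, Pi.zero_apply, sub_mul]
    rw [Finset.sum_sub_distrib, hkey q, sub_self]
  have hzero := gp_unique (vs i) M (hvAV i) sN
    (by
      intro m hm
      rw [hsNdef] at hm
      obtain ⟨V, _, rfl⟩ := Finset.mem_image.1 hm
      exact hidxlt V)
    hsNcard cc hsum0 hcomb
  have hex : ∃ V ∈ α.attach, 0 < φ (V:Set X) z := by
    by_contra hno
    push_neg at hno
    have h1 : ∑ V ∈ α.attach, φ (V:Set X) z ≤ 0 :=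
      Finset.sum_nonpos (fun V hV => hno V hV)
    rw [Finset.sum_attach α (fun V => φ V z), hφsum z] at h1
    linarith
  obtain ⟨V₀, hV₀mem, hV₀pos⟩ := hex
  have hV₀sU : V₀ ∈ sU := by
    rw [hsUdef, Finset.mem_filter]
    exact ⟨hV₀mem, Or.inl (ne_of_gt hV₀pos)⟩
  have hc0 : cc (idx V₀) = 0 := hzero (idx V₀) (by
    rw [hsNdef]
    exact Finset.mem_image_of_mem idx hV₀sU)
  rw [hccidx V₀] at hc0
  have hz'pos : 0 < φ (V₀:Set X) z' := by linarith
  have hzV := hφpos _ _ hV₀pos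
  have hz'V := hφpos _ _ hz'pos
  have hρ := hmesh (V₀:Set X) V₀.2 z hzV z' hz'V
  have hd : dist x y ≤ ε := by
    have hx : x = actX (em a) z := (hXcancel (em a) x).symm
    have hy : y = actX (em a) z' := (hXcancel (em a) y).symm
    calc dist x y = dist (actX (em a) z) (actX (em a) z') := by rw [← hx, ← hy]
      _ ≤ _ := dist_le_rho actX z z' (em a) (hembd a)
      _ ≤ ε := hρ
  have hεη : ε ≤ η/2 := min_le_left _ _
  linarith





/-- if `π : (X,ℤ^k,T) → (Y,ℤ^k,S)` is a factor map, `dim_Rok(Y) = D` and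
`mdim(X) < L/2`, then the set of `f ∈ C(X,[0,1]^{(D+1)L})` for which `I_f × π` is an
embedding (equivalently, is injective) is a dense `G_δ` in `C(X,[0,1]^{(D+1)L})`. -/
theorem stmt13 {k : ℕ} (hk : 0 < k)
    {X Y : Type*} [MetricSpace X] [CompactSpace X] [MetricSpace Y] [CompactSpace Y]
    (actX : (Fin k → ℤ) → X → X) (actY : (Fin k → ℤ) → Y → Y)
    (hX0 : actX 0 = id) (hXadd : ∀ g h, actX (g + h) = actX g ∘ actX h)
    (hXc : ∀ g, Continuous (actX g))
    (hY0 : actY 0 = id) (hYadd : ∀ g h, actY (g + h) = actY g ∘ actY h)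
    (hYc : ∀ g, Continuous (actY g))
    (π : X → Y) (hπc : Continuous π) (hπs : Function.Surjective π)
    (hπe : ∀ g x, π (actX g x) = actY g (π x))
    (D L : ℕ) (hL : 0 < L)
    (hRokLE : RokhlinDimLE k actY D) (hRokMin : ∀ D' < D, ¬ RokhlinDimLE k actY D')
    (hmdim : 2 * mdimZk k X actX < (L : ℝ≥0∞)) :
    Dense {f : C(X, Fin ((D + 1) * L) → Set.Icc (0:ℝ) 1) |
        Function.Injective fun x : X => ((fun g : Fin k → ℤ => f (actX g x)), π x)} ∧
    IsGδ {f : C(X, Fin ((D + 1) * L) → Set.Icc (0:ℝ) 1) |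
        Function.Injective fun x : X => ((fun g : Fin k → ℤ => f (actX g x)), π x)} := by
  have hSeq : {f : C(X, Fin ((D + 1) * L) → Set.Icc (0:ℝ) 1) |
      Function.Injective fun x : X => ((fun g : Fin k → ℤ => f (actX g x)), π x)}
      = ⋂ m : ℕ, {f : C(X, Fin ((D + 1) * L) → Set.Icc (0:ℝ) 1) |
        ∀ x y : X, 1/((m:ℝ)+1) ≤ dist x y →
          ((fun g : Fin k → ℤ => f (actX g x)), π x) ≠
          ((fun g : Fin k → ℤ => f (actX g y)), π y)} := by
    ext f
    simp only [Set.mem_setOf_eq, Set.mem_iInter]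
    constructor
    · intro hinj m x y hxy hcon
      have h0 : x = y := hinj hcon
      rw [h0, dist_self] at hxy
      have hpos : (0:ℝ) < 1/((m:ℝ)+1) := by positivity
      linarith
    · intro hall x y hcon
      by_contra hne
      have hd : 0 < dist x y := dist_pos.2 hne
      obtain ⟨m, hm⟩ := exists_nat_one_div_lt hd
      exact hall m x y (le_of_lt hm) hcon
  rw [hSeq]
  haveI hB : BaireSpace C(X, Fin ((D + 1) * L) → Set.Icc (0:ℝ) 1) := inferInstance
  constructor
  · apply dense_iInter_of_isOpen
    · intro m
      exact open_good actX hXc π hπc ((D+1)*L) (1/((m:ℝ)+1))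
    · intro m
      exact dense_good actX actY hX0 hXadd hXc hY0 hYadd hYc π hπc hπe D L hRokLE hmdim
        (1/((m:ℝ)+1)) (by positivity)
  · exact IsGδ.iInter fun m => (open_good actX hXc π hπc ((D+1)*L) (1/((m:ℝ)+1))).isGδ
end
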